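/- arXiv:2405.06587 — 10 statements merged into one kernel-verified Lean document; each statement's English description precedes it below -/
import Mathlib

section
/- Let p be a nonzero complex number that is not a root of unity. Then there exists a left B_p-module that is simple, faithful, and infinite-dimensional as a complex vector space. (Proposition 2.6(1).) -/
/-- The defining relation of the quantum plane: `x*y ~ p • (y*x)`. -/
def quantumRel (p : ℂ) : FreeAlgebra ℂ (Fin 2) → FreeAlgebra ℂ (Fin 2) → Prop :=
  fun a b => a = FreeAlgebra.ι ℂ 0 * FreeAlgebra.ι ℂ 1 ∧
             b = p • (FreeAlgebra.ι ℂ 1 * FreeAlgebra.ι ℂ 0)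

/-- The quantum plane `B_p`: the quotient of the free `ℂ`-algebra on two
generators `x`, `y` by the two-sided ideal generated by `x*y - p*y*x`. -/
abbrev QuantumPlane (p : ℂ) := RingQuot (quantumRel p)

noncomputable section
namespace QPAux

abbrev V : Type := ℤ →₀ ℂ

def XX : Module.End ℂ V := Finsupp.lsum ℂ fun n => Finsupp.lsingle (n + 1)

def YY (p : ℂ) : Module.End ℂ V := Finsupp.lsum ℂ fun n => (p ^ (-n) : ℂ) • Finsupp.lsingle (n - 1)

lemma XX_single (n : ℤ) (c : ℂ) :
    XX (Finsupp.single n c) = Finsupp.single (n + 1) c := by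
  simp only [XX, Finsupp.lsum_single, Finsupp.lsingle_apply]

lemma YY_single (p : ℂ) (n : ℤ) (c : ℂ) :
    YY p (Finsupp.single n c) = Finsupp.single (n - 1) (p ^ (-n) * c) := by
  simp only [YY, Finsupp.lsum_single, LinearMap.smul_apply, Finsupp.lsingle_apply,
    Finsupp.smul_single, smul_eq_mul]

lemma XY_rel (p : ℂ) (hp : p ≠ 0) : XX * YY p = p • (YY p * XX) := by
  refine Finsupp.lhom_ext fun n c => ?_
  simp only [Module.End.mul_apply, LinearMap.smul_apply, XX_single, YY_single,
    Finsupp.smul_single, smul_eq_mul, sub_add_cancel, add_sub_cancel_right]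
  congr 1
  rw [← mul_assoc, mul_comm p (p ^ (-(n+1))), ← zpow_add_one₀ hp]
  norm_num

def rho (p : ℂ) : FreeAlgebra ℂ (Fin 2) →ₐ[ℂ] Module.End ℂ V :=
  FreeAlgebra.lift ℂ ![XX, YY p]

lemma rel_holds (p : ℂ) (hp : p ≠ 0) :
    ∀ ⦃a b : FreeAlgebra ℂ (Fin 2)⦄, quantumRel p a b → rho p a = rho p b := by
  rintro a b ⟨rfl, rfl⟩
  simp only [rho, map_mul, map_smul, FreeAlgebra.lift_ι_apply,
    Matrix.cons_val_zero, Matrix.cons_val_one, Matrix.head_cons]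
  exact XY_rel p hp

def Phi (p : ℂ) (hp : p ≠ 0) : QuantumPlane p →ₐ[ℂ] Module.End ℂ V :=
  RingQuot.liftAlgHom ℂ ⟨rho p, rel_holds p hp⟩

/-- `x` as element of the quantum plane. -/
def xq (p : ℂ) : QuantumPlane p := RingQuot.mkAlgHom ℂ (quantumRel p) (FreeAlgebra.ι ℂ 0)
def yq (p : ℂ) : QuantumPlane p := RingQuot.mkAlgHom ℂ (quantumRel p) (FreeAlgebra.ι ℂ 1)

lemma Phi_x (p : ℂ) (hp : p ≠ 0) : Phi p hp (xq p) = XX := by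
  simp only [Phi, xq, RingQuot.liftAlgHom_mkAlgHom_apply, rho, FreeAlgebra.lift_ι_apply,
    Matrix.cons_val_zero]

lemma Phi_y (p : ℂ) (hp : p ≠ 0) : Phi p hp (yq p) = YY p := by
  simp only [Phi, yq, RingQuot.liftAlgHom_mkAlgHom_apply, rho, FreeAlgebra.lift_ι_apply,
    Matrix.cons_val_one, Matrix.head_cons, Matrix.cons_val_zero]

lemma xy_rel (p : ℂ) : xq p * yq p = p • (yq p * xq p) := by
  have := RingQuot.mkAlgHom_rel ℂ (s := quantumRel p)
    (x := FreeAlgebra.ι ℂ 0 * FreeAlgebra.ι ℂ 1)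
    (y := p • (FreeAlgebra.ι ℂ 1 * FreeAlgebra.ι ℂ 0)) ⟨rfl, rfl⟩
  simpa only [map_mul, map_smul, xq, yq] using this

lemma yx_rel (p : ℂ) (hp : p ≠ 0) : yq p * xq p = p⁻¹ • (xq p * yq p) := by
  rw [xy_rel p, smul_smul, inv_mul_cancel₀ hp, one_smul]

lemma ypow_x (p : ℂ) (hp : p ≠ 0) (b : ℕ) :
    yq p ^ b * xq p = (p ^ b)⁻¹ • (xq p * yq p ^ b) := by
  induction b with
  | zero => simp
  | succ b ih =>
      rw [pow_succ, mul_assoc, yx_rel p hp, mul_smul_comm, ← mul_assoc, ih,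
        smul_mul_assoc, mul_assoc, smul_smul, ← mul_inv, ← pow_succ']

lemma ypow_xpow (p : ℂ) (hp : p ≠ 0) (a b : ℕ) :
    yq p ^ b * xq p ^ a = (p ^ (a * b))⁻¹ • (xq p ^ a * yq p ^ b) := by
  induction a with
  | zero => simp
  | succ a ih =>
      rw [pow_succ, ← mul_assoc, ih, smul_mul_assoc, mul_assoc, ypow_x p hp,
        mul_smul_comm, smul_smul, ← mul_inv, ← pow_add, ← mul_assoc, ← pow_succ]
      ring_nf

lemma Xpow_single (a : ℕ) (n : ℤ) (c : ℂ) :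
    (XX ^ a) (Finsupp.single n c) = Finsupp.single (n + a) c := by
  induction a generalizing n c with
  | zero => simp
  | succ a ih =>
      rw [pow_succ, Module.End.mul_apply, XX_single, ih]
      congr 1
      push_cast
      ring

/-- exponent bookkeeping: `tw b = 0 + 1 + ... + (b-1)`. -/
def tw : ℕ → ℤ
  | 0 => 0
  | b + 1 => tw b + b

lemma Ypow_single (p : ℂ) (hp : p ≠ 0) (b : ℕ) (n : ℤ) (c : ℂ) :
    (YY p ^ b) (Finsupp.single n c) = Finsupp.single (n - b) (p ^ (tw b - b * n) * c) := by
  induction b generalizing n c with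
  | zero => simp [tw]
  | succ b ih =>
      rw [pow_succ, Module.End.mul_apply, YY_single, ih]
      have h1 : n - 1 - (b : ℤ) = n - ((b : ℕ) + 1 : ℕ) := by push_cast; ring
      have h2 : p ^ (tw b - b * (n - 1)) * (p ^ (-n) * c)
          = p ^ (tw (b + 1) - ((b : ℕ) + 1 : ℕ) * n) * c := by
        rw [← mul_assoc, ← zpow_add₀ hp]
        congr 2
        simp only [tw]
        push_cast
        ring
      rw [h1, h2]

lemma D_apply (p : ℂ) (v : V) (k : ℤ) : ((XX * YY p) v) k = p ^ (-k) * v k := by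
  induction v using Finsupp.induction_linear with
  | zero => simp
  | add f g hf hg =>
      rw [map_add, Finsupp.add_apply, hf, hg, Finsupp.add_apply]
      ring
  | single m c =>
      rw [Module.End.mul_apply, YY_single, XX_single, sub_add_cancel]
      rw [Finsupp.single_apply, Finsupp.single_apply]
      by_cases h : m = k
      · subst h; simp
      · simp [h]
/-- The span of the monomials `x^a y^b` in the quantum plane. -/
def monSpan (p : ℂ) : Submodule ℂ (QuantumPlane p) :=
  Submodule.span ℂ (Set.range fun ab : ℕ × ℕ => xq p ^ ab.1 * yq p ^ ab.2)

lemma mono_mem (p : ℂ) (a b : ℕ) : xq p ^ a * yq p ^ b ∈ monSpan p :=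
  Submodule.subset_span ⟨(a, b), rfl⟩

lemma mul_mem_monSpan (p : ℂ) (hp : p ≠ 0) {u w : QuantumPlane p}
    (hu : u ∈ monSpan p) (hw : w ∈ monSpan p) : u * w ∈ monSpan p := by
  induction hu using Submodule.span_induction with
  | mem u hu =>
      induction hw using Submodule.span_induction with
      | mem w hw =>
          obtain ⟨⟨a, b⟩, rfl⟩ := hu
          obtain ⟨⟨a', b'⟩, rfl⟩ := hw
          have : (xq p ^ a * yq p ^ b) * (xq p ^ a' * yq p ^ b')
              = (p ^ (a' * b))⁻¹ • (xq p ^ (a + a') * yq p ^ (b + b')) := by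
            rw [mul_assoc, ← mul_assoc (yq p ^ b), ypow_xpow p hp, smul_mul_assoc,
              mul_smul_comm]
            congr 1
            rw [← mul_assoc, ← mul_assoc, ← pow_add, mul_assoc, ← pow_add]
          rw [this]
          exact Submodule.smul_mem _ _ (mono_mem p _ _)
      | zero => rw [mul_zero]; exact Submodule.zero_mem _
      | add w₁ w₂ _ _ h1 h2 => rw [mul_add]; exact Submodule.add_mem _ h1 h2
      | smul c w _ h => rw [mul_smul_comm]; exact Submodule.smul_mem _ _ h
  | zero => rw [zero_mul]; exact Submodule.zero_mem _
  | add u₁ u₂ _ _ h1 h2 => rw [add_mul]; exact Submodule.add_mem _ h1 h2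
  | smul c u _ h => rw [smul_mul_assoc]; exact Submodule.smul_mem _ _ h

lemma monSpan_top (p : ℂ) (hp : p ≠ 0) (r : QuantumPlane p) : r ∈ monSpan p := by
  obtain ⟨w, rfl⟩ := RingQuot.mkAlgHom_surjective ℂ (quantumRel p) r
  induction w using FreeAlgebra.induction with
  | grade0 c =>
      rw [AlgHom.commutes, Algebra.algebraMap_eq_smul_one]
      have h1 : (1 : QuantumPlane p) = xq p ^ 0 * yq p ^ 0 := by simp
      rw [h1]
      exact Submodule.smul_mem _ _ (mono_mem p 0 0)
  | grade1 i =>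
      fin_cases i
      · show RingQuot.mkAlgHom ℂ (quantumRel p) (FreeAlgebra.ι ℂ 0) ∈ monSpan p
        have : RingQuot.mkAlgHom ℂ (quantumRel p) (FreeAlgebra.ι ℂ 0)
            = xq p ^ 1 * yq p ^ 0 := by simp [xq]
        rw [this]; exact mono_mem p 1 0
      · show RingQuot.mkAlgHom ℂ (quantumRel p) (FreeAlgebra.ι ℂ 1) ∈ monSpan p
        have : RingQuot.mkAlgHom ℂ (quantumRel p) (FreeAlgebra.ι ℂ 1)
            = xq p ^ 0 * yq p ^ 1 := by simp [yq]
        rw [this]; exact mono_mem p 0 1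
  | mul u w hu hw => rw [map_mul]; exact mul_mem_monSpan p hp hu hw
  | add u w hu hw => rw [map_add]; exact Submodule.add_mem _ hu hw

lemma zpow_eq_one_iff (p : ℂ) (_hp : p ≠ 0) (hroot : ∀ k : ℕ, 1 ≤ k → p ^ k ≠ 1)
    (k : ℤ) (hk : p ^ k = 1) : k = 0 := by
  have hnat : ∀ m : ℕ, p ^ (m : ℤ) = 1 → m = 0 := by
    intro m hm
    by_contra h
    exact hroot m (by omega) (by rwa [zpow_natCast] at hm)
  rcases le_or_gt 0 k with h | h
  · lift k to ℕ using h
    exact_mod_cast hnat k hk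
  · have h2 : p ^ (-k) = 1 := by rw [zpow_neg, hk, inv_one]
    lift -k to ℕ using (by omega) with m hm
    have := hnat m h2
    omega

lemma zpow_injective (p : ℂ) (hp : p ≠ 0) (hroot : ∀ k : ℕ, 1 ≤ k → p ^ k ≠ 1)
    {m n : ℤ} (h : p ^ m = p ^ n) : m = n := by
  have h1 : p ^ (m - n) = 1 := by
    rw [zpow_sub₀ hp, h, div_self (zpow_ne_zero n hp)]
  have := zpow_eq_one_iff p hp hroot _ h1
  omega

lemma Phi_mono_single (p : ℂ) (hp : p ≠ 0) (a b : ℕ) (n : ℤ) :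
    Phi p hp (xq p ^ a * yq p ^ b) (Finsupp.single n 1)
      = Finsupp.single (n - b + a) (p ^ (tw b - b * n)) := by
  rw [map_mul, map_pow, map_pow, Phi_x, Phi_y, Module.End.mul_apply,
    Ypow_single p hp, mul_one, Xpow_single]

lemma faithful_aux (p : ℂ) (hp : p ≠ 0) (hroot : ∀ k : ℕ, 1 ≤ k → p ^ k ≠ 1)
    (r : QuantumPlane p) (h : ∀ v : V, Phi p hp r v = 0) : r = 0 := by
  obtain ⟨c, hc⟩ := Finsupp.mem_span_range_iff_exists_finsupp.mp (monSpan_top p hp r)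
  suffices hc0 : c = 0 by
    rw [← hc, hc0, Finsupp.sum_zero_index]
  have heval : ∀ (n m : ℤ),
      (∑ ab ∈ c.support, if n - (ab.2 : ℤ) + ab.1 = m then c ab * p ^ (tw ab.2 - ab.2 * n) else 0)
        = 0 := by
    intro n m
    have h1 := h (Finsupp.single n 1)
    rw [← hc] at h1
    have h2 : Phi p hp (c.sum fun ab k => k • (xq p ^ ab.1 * yq p ^ ab.2)) (Finsupp.single n 1)
        = ∑ ab ∈ c.support,
            Finsupp.single (n - (ab.2 : ℤ) + ab.1) (c ab * p ^ (tw ab.2 - ab.2 * n)) := by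
      rw [Finsupp.sum, map_sum, LinearMap.coe_sum, Finset.sum_apply]
      refine Finset.sum_congr rfl fun ab _ => ?_
      rw [map_smul, LinearMap.smul_apply, Phi_mono_single p hp, Finsupp.smul_single,
        smul_eq_mul]
    rw [h2] at h1
    calc (∑ ab ∈ c.support,
            if n - (ab.2 : ℤ) + ab.1 = m then c ab * p ^ (tw ab.2 - ab.2 * n) else 0)
        = (∑ ab ∈ c.support,
            Finsupp.single (n - (ab.2 : ℤ) + ab.1) (c ab * p ^ (tw ab.2 - ab.2 * n))) m := by
          rw [Finset.sum_apply']
          exact Finset.sum_congr rfl fun ab _ => (Finsupp.single_apply).symm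
      _ = 0 := by rw [h1]; rfl
  have hco : ∀ ab : ℕ × ℕ, c ab = 0 := by
    intro ab₀
    by_cases hs : ab₀ ∈ c.support
    · set d : ℤ := (ab₀.1 : ℤ) - ab₀.2 with hd
      set P : Polynomial ℂ := ∑ ab ∈ c.support,
        if (ab.1 : ℤ) - ab.2 = d then
          Polynomial.C (c ab * p ^ tw ab.2) * Polynomial.X ^ ab.2 else 0 with hP
      have hPeval : ∀ n : ℤ, P.eval (p ^ (-n)) = 0 := by
        intro n
        rw [hP, Polynomial.eval_finset_sum]
        rw [← heval n (n + d)]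
        refine Finset.sum_congr rfl fun ab _ => ?_
        by_cases hcond : (ab.1 : ℤ) - ab.2 = d
        · rw [if_pos hcond, if_pos (by omega)]
          rw [Polynomial.eval_mul, Polynomial.eval_C, Polynomial.eval_pow, Polynomial.eval_X,
            ← zpow_natCast (p ^ (-n)) ab.2, ← zpow_mul, mul_assoc, ← zpow_add₀ hp]
          congr 2
          ring
        · rw [if_neg hcond, if_neg (by omega), Polynomial.eval_zero]
      have hP0 : P = 0 := by
        refine Polynomial.eq_zero_of_infinite_isRoot P ?_
        refine Set.infinite_of_injective_forall_mem
          (f := fun n : ℕ => p ^ (-(n : ℤ))) ?_ ?_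
        · intro a b hab
          have := zpow_injective p hp hroot hab
          omega
        · intro a
          exact hPeval a
      have hcoeff := congrArg (fun q => Polynomial.coeff q ab₀.2) hP0
      simp only [hP, Polynomial.finset_sum_coeff, Polynomial.coeff_zero] at hcoeff
      rw [Finset.sum_eq_single ab₀ ?other ?notmem] at hcoeff
      case other =>
        intro ab hab hne
        by_cases hcond : (ab.1 : ℤ) - ab.2 = d
        · rw [if_pos hcond, Polynomial.coeff_C_mul, Polynomial.coeff_X_pow]
          have : ab₀.2 ≠ ab.2 := by
            intro he
            apply hne
            have : ab.1 = ab₀.1 := by omega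
            exact Prod.ext this he.symm
          rw [if_neg this, mul_zero]
        · rw [if_neg hcond, Polynomial.coeff_zero]
      case notmem => intro hnot; exact absurd hs hnot
      rw [if_pos rfl, Polynomial.coeff_C_mul, Polynomial.coeff_X_pow, if_pos rfl,
        mul_one] at hcoeff
      exact (mul_eq_zero.mp hcoeff).resolve_right (zpow_ne_zero _ hp)
    · exact Finsupp.notMem_support_iff.mp hs
  ext ab
  exact hco ab

def qpModule (p : ℂ) (hp : p ≠ 0) : Module (QuantumPlane p) V :=
  Module.compHom V (Phi p hp).toRingHom

lemma tower_aux (p : ℂ) (hp : p ≠ 0) :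
    letI := qpModule p hp
    IsScalarTower ℂ (QuantumPlane p) V := by
  letI := qpModule p hp
  have smul_def : ∀ (r : QuantumPlane p) (v : V), r • v = Phi p hp r v := fun _ _ => rfl
  refine ⟨fun c r v => ?_⟩
  rw [smul_def, smul_def, map_smul, LinearMap.smul_apply]

lemma faithful_smul (p : ℂ) (hp : p ≠ 0) (hroot : ∀ k : ℕ, 1 ≤ k → p ^ k ≠ 1) :
    letI := qpModule p hp
    FaithfulSMul (QuantumPlane p) V := by
  letI := qpModule p hp
  have smul_def : ∀ (r : QuantumPlane p) (v : V), r • v = Phi p hp r v := fun _ _ => rfl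
  refine ⟨fun {r s} h => ?_⟩
  have h0 : r - s = 0 := by
    refine faithful_aux p hp hroot _ (fun v => ?_)
    rw [map_sub, LinearMap.sub_apply, ← smul_def, ← smul_def, h v, sub_self]
  exact sub_eq_zero.mp h0

lemma simple_aux (p : ℂ) (hp : p ≠ 0) (hroot : ∀ k : ℕ, 1 ≤ k → p ^ k ≠ 1) :
    letI := qpModule p hp
    IsSimpleModule (QuantumPlane p) V := by
  letI := qpModule p hp
  have smul_def : ∀ (r : QuantumPlane p) (v : V), r • v = Phi p hp r v := fun _ _ => rfl
  have csmul : ∀ (N : Submodule (QuantumPlane p) V) (c : ℂ) (v : V), v ∈ N → c • v ∈ N := by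
    intro N c v hv
    have hcv : c • v = (algebraMap ℂ (QuantumPlane p) c) • v := by
      rw [smul_def, AlgHom.commutes, Module.algebraMap_end_apply]
    rw [hcv]
    exact N.smul_mem _ hv
  have hbt : (⊥ : Submodule (QuantumPlane p) V) ≠ ⊤ := by
    intro hEq
    have h1 : (Finsupp.single 0 1 : V) ∈ (⊤ : Submodule (QuantumPlane p) V) := trivial
    rw [← hEq, Submodule.mem_bot] at h1
    exact one_ne_zero (Finsupp.single_eq_zero.mp h1)
  haveI : Nontrivial (Submodule (QuantumPlane p) V) := nontrivial_of_ne ⊥ ⊤ hbt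
  rw [isSimpleModule_iff]
  constructor
  intro N
  by_cases hN : N = ⊥
  · left; exact hN
  right
  obtain ⟨v, hvN, hv0⟩ := (Submodule.ne_bot_iff N).mp hN
  have key : ∀ (k : ℕ) (v : V), v.support.card ≤ k → v ∈ N → v ≠ 0 →
      ∃ n : ℤ, Finsupp.single n (1 : ℂ) ∈ N := by
    intro k
    induction k with
    | zero =>
        intro v hcard hvN hv0
        exfalso
        apply hv0
        have : v.support = ∅ := Finset.card_eq_zero.mp (by omega)
        exact Finsupp.support_eq_empty.mp this
    | succ k ih =>
        intro v hcard hvN hv0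
        by_cases hone : v.support.card = 1
        · obtain ⟨n, b, hb, hv⟩ := Finsupp.card_support_eq_one'.mp hone
          refine ⟨n, ?_⟩
          have hmem := csmul N b⁻¹ v hvN
          rwa [hv, Finsupp.smul_single, smul_eq_mul, inv_mul_cancel₀ hb] at hmem
        · have hc0 : v.support.card ≠ 0 := fun h0 =>
            hv0 (Finsupp.support_eq_empty.mp (Finset.card_eq_zero.mp h0))
          obtain ⟨n, hn⟩ := Finsupp.support_nonempty_iff.mpr hv0
          set w : V := (xq p * yq p) • v - (p ^ (-n) : ℂ) • v with hw
          have hwN : w ∈ N := N.sub_mem (N.smul_mem _ hvN) (csmul N _ _ hvN)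
          have hwapp : ∀ k : ℤ, w k = (p ^ (-k) - p ^ (-n)) * v k := by
            intro k
            rw [hw, Finsupp.sub_apply, Finsupp.smul_apply, smul_eq_mul]
            have hD : ((xq p * yq p) • v) = (XX * YY p) v := by
              rw [smul_def, map_mul, Phi_x, Phi_y]
            rw [hD, D_apply]
            ring
          obtain ⟨m, hm, hmn⟩ := Finset.exists_mem_ne (s := v.support) (by omega) n
          have hw0 : w ≠ 0 := by
            intro h0
            have hzero : (0 : ℂ) = (p ^ (-m) - p ^ (-n)) * v m := by
              rw [← hwapp m, h0, Finsupp.zero_apply]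
            have hfac : p ^ (-m) - p ^ (-n) ≠ 0 := by
              refine sub_ne_zero.mpr fun he => hmn ?_
              have := zpow_injective p hp hroot he
              omega
            exact (mul_ne_zero hfac (Finsupp.mem_support_iff.mp hm)) hzero.symm
          have hsub : w.support ⊆ v.support.erase n := by
            intro k hk
            rw [Finset.mem_erase]
            have hk0 : w k ≠ 0 := Finsupp.mem_support_iff.mp hk
            rw [hwapp] at hk0
            refine ⟨fun he => ?_, Finsupp.mem_support_iff.mpr fun h => hk0 (by rw [h, mul_zero])⟩
            subst he
            exact hk0 (by rw [sub_self, zero_mul])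
          have hcard' : w.support.card ≤ k := by
            have h1 : w.support.card ≤ (v.support.erase n).card := Finset.card_le_card hsub
            have h2 : (v.support.erase n).card = v.support.card - 1 :=
              Finset.card_erase_of_mem hn
            rw [h2] at h1
            omega
          exact ih w hcard' hwN hw0
  obtain ⟨n, hn1⟩ := key v.support.card v le_rfl hvN hv0
  have hxstep : ∀ (a : ℕ) (m : ℤ), Finsupp.single m (1 : ℂ) ∈ N →
      Finsupp.single (m + a) (1 : ℂ) ∈ N := by
    intro a m hm
    have h1 := N.smul_mem (xq p ^ a) hm
    rwa [smul_def, map_pow, Phi_x, Xpow_single] at h1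
  have hystep : ∀ (b : ℕ) (m : ℤ), Finsupp.single m (1 : ℂ) ∈ N →
      Finsupp.single (m - b) (1 : ℂ) ∈ N := by
    intro b m hm
    have h1 := N.smul_mem (yq p ^ b) hm
    rw [smul_def, map_pow, Phi_y, Ypow_single p hp, mul_one] at h1
    have h2 := csmul N ((p ^ (tw b - b * m))⁻¹) _ h1
    rwa [Finsupp.smul_single, smul_eq_mul, inv_mul_cancel₀ (zpow_ne_zero _ hp)] at h2
  have hall : ∀ m : ℤ, Finsupp.single m (1 : ℂ) ∈ N := by
    intro m
    have h1 := hystep (n - m).toNat n hn1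
    have h2 := hxstep (m - (n - ((n - m).toNat : ℤ))).toNat _ h1
    have he : (n - ((n - m).toNat : ℤ)) + (((m - (n - ((n - m).toNat : ℤ))).toNat : ℤ)) = m := by
      omega
    rwa [he] at h2
  rw [eq_top_iff]
  intro u hu
  clear hu
  induction u using Finsupp.induction_linear with
  | zero => exact N.zero_mem
  | add f g hf hg => exact N.add_mem hf hg
  | single m c =>
      have h1 := csmul N c _ (hall m)
      rwa [Finsupp.smul_single, smul_eq_mul, mul_one] at h1

end QPAux

end

/-- **Proposition 2.6(1).** If `p ∈ ℂ` is nonzero and not a root of unity, then there exists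
a simple, faithful, infinite-dimensional (over `ℂ`) left module over the quantum plane `B_p`. -/
theorem proposition_2_6_1 (p : ℂ) (hp : p ≠ 0)
    (hroot : ∀ k : ℕ, 1 ≤ k → p ^ k ≠ 1) :
    ∃ (V : Type) (_ : AddCommGroup V) (_ : Module (QuantumPlane p) V)
      (_ : Module ℂ V) (_ : IsScalarTower ℂ (QuantumPlane p) V),
      IsSimpleModule (QuantumPlane p) V ∧ FaithfulSMul (QuantumPlane p) V ∧
        ¬ Module.Finite ℂ V := by
  refine ⟨QPAux.V, inferInstance, QPAux.qpModule p hp, inferInstance,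
    QPAux.tower_aux p hp, QPAux.simple_aux p hp hroot, QPAux.faithful_smul p hp hroot, ?_⟩
  intro hfin
  haveI := hfin
  haveI : Finite ℤ :=
    Module.Finite.finite_basis (R := ℂ) (M := QPAux.V) Finsupp.basisSingleOne
  exact not_finite ℤ
end

section
/- Let p be a nonzero complex number that is not a root of unity. Let V be the ℂ-vector space with basis (v_i)_{i∈ℤ} (for instance, the space of finitely supported functions ℤ → ℂ), and define ℂ-linear endomorphisms X and Y of V on the basis by X(v_i) = v_{i+1} and Y(v_i) = p^{−i}·v_{i−1}. Then X∘Y = p·(Y∘X), and the only ℂ-subspaces W of V satisfying X(W) ⊆ W and Y(W) ⊆ W are W = 0 and W = V. (Explicit construction proving Proposition 2.6(1).) -/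
/-- **Explicit construction proving Proposition 2.6(1).**
Let `p ∈ ℂ` be nonzero and not a root of unity. On the `ℂ`-vector space `V = ℤ →₀ ℂ`
with standard basis `(v_i)_{i ∈ ℤ}`, any `ℂ`-linear endomorphisms `X`, `Y` satisfying
`X v_i = v_{i+1}` and `Y v_i = p^{-i} • v_{i-1}` satisfy `X ∘ Y = p • (Y ∘ X)`, and the
only subspaces invariant under both `X` and `Y` are `0` and `V`. -/
theorem explicit_simple_module (p : ℂ) (hp : p ≠ 0)
    (hroot : ∀ k : ℕ, 1 ≤ k → p ^ k ≠ 1)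
    (X Y : (ℤ →₀ ℂ) →ₗ[ℂ] (ℤ →₀ ℂ))
    (hX : ∀ i : ℤ, X (Finsupp.single i 1) = Finsupp.single (i + 1) 1)
    (hY : ∀ i : ℤ, Y (Finsupp.single i 1) = p ^ (-i) • Finsupp.single (i - 1) 1) :
    X ∘ₗ Y = p • (Y ∘ₗ X) ∧
      ∀ W : Submodule ℂ (ℤ →₀ ℂ),
        (∀ w ∈ W, X w ∈ W) → (∀ w ∈ W, Y w ∈ W) → W = ⊥ ∨ W = ⊤ := by
  -- p^m = 1 only for m = 0
  have key : ∀ m : ℤ, p ^ m = 1 → m = 0 := by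
    intro m hm
    by_contra h
    rcases lt_or_gt_of_ne h with h' | h'
    · have h2 : p ^ (-m) = 1 := by rw [zpow_neg, hm, inv_one]
      have h3 : p ^ (-m).toNat = 1 := by
        rw [← zpow_natCast, Int.toNat_of_nonneg (by omega)]; exact h2
      exact hroot _ (by omega) h3
    · have h3 : p ^ m.toNat = 1 := by
        rw [← zpow_natCast, Int.toNat_of_nonneg (by omega)]; exact hm
      exact hroot _ (by omega) h3
  have cinj : ∀ i j : ℤ, p ^ (-i - 1) = p ^ (-j - 1) → i = j := by
    intro i j hij
    have : p ^ ((-i - 1) - (-j - 1)) = 1 := by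
      rw [zpow_sub₀ hp, hij, div_self (zpow_ne_zero _ hp)]
    have := key _ this; omega
  constructor
  · apply Finsupp.lhom_ext
    intro i b
    have hb : Finsupp.single i b = b • Finsupp.single i (1:ℂ) := by
      rw [Finsupp.smul_single', mul_one]
    rw [hb, map_smul, map_smul]
    congr 1
    rw [LinearMap.comp_apply, LinearMap.smul_apply, LinearMap.comp_apply, hY, map_smul,
      hX, hX, hY, sub_add_cancel, add_sub_cancel_right, smul_smul]
    congr 1
    rw [← zpow_one_add₀ hp]
    congr 1; ring
  · intro W hXW hYW
    by_cases hW : W = ⊥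
    · exact Or.inl hW
    right
    set D : (ℤ →₀ ℂ) →ₗ[ℂ] (ℤ →₀ ℂ) := Y ∘ₗ X with hD
    have hDi : ∀ i : ℤ, D (Finsupp.single i 1) = p ^ (-i - 1) • Finsupp.single i (1:ℂ) := by
      intro i
      rw [hD, LinearMap.comp_apply, hX, hY]
      congr 2
      · ring
      · ring
    have hDw : ∀ (w : ℤ →₀ ℂ) (j : ℤ), D w j = p ^ (-j - 1) * w j := by
      intro w
      induction w using Finsupp.induction_linear with
      | zero => intro j; simp
      | add f g hf hg => intro j; simp [map_add, hf, hg]; ring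
      | single a b =>
        intro j
        have hb : Finsupp.single a b = b • Finsupp.single a (1:ℂ) := by
          rw [Finsupp.smul_single', mul_one]
        rw [hb, map_smul, hDi]
        simp only [Finsupp.smul_apply, Finsupp.single_apply, smul_eq_mul]
        split
        · next h => subst h; ring
        · ring
    have hDW : ∀ w ∈ W, D w ∈ W := fun w hw => hYW _ (hXW _ hw)
    -- main induction: coordinates of elements of W give basis vectors in W
    have main : ∀ n : ℕ, ∀ w : ℤ →₀ ℂ, w ∈ W → w.support.card ≤ n →
        ∀ i, w i ≠ 0 → Finsupp.single i (1:ℂ) ∈ W := by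
      intro n
      induction n with
      | zero =>
        intro w hw hc i hi
        have : w.support = ∅ := Finset.card_eq_zero.mp (Nat.le_zero.mp hc)
        have := Finsupp.notMem_support_iff.mp (this ▸ Finset.notMem_empty i)
        exact absurd this hi
      | succ n ih =>
        intro w hw hc i hi
        set w' := D w - p ^ (-i - 1) • w with hw'def
        have hw'W : w' ∈ W := W.sub_mem (hDW w hw) (W.smul_mem _ hw)
        have hco : ∀ j, w' j = (p ^ (-j - 1) - p ^ (-i - 1)) * w j := by
          intro j
          rw [hw'def, Finsupp.sub_apply, Finsupp.smul_apply, hDw, smul_eq_mul]; ring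
        have hsub : w'.support ⊆ w.support.erase i := by
          intro j hj
          rw [Finsupp.mem_support_iff, hco] at hj
          rcases mul_ne_zero_iff.mp hj with ⟨h1, h2⟩
          refine Finset.mem_erase.mpr ⟨?_, Finsupp.mem_support_iff.mpr h2⟩
          intro hji; apply h1; rw [hji, sub_self]
        have hiw : i ∈ w.support := Finsupp.mem_support_iff.mpr hi
        have hcard : w'.support.card ≤ n := by
          calc w'.support.card ≤ (w.support.erase i).card := Finset.card_le_card hsub
            _ = w.support.card - 1 := Finset.card_erase_of_mem hiw
            _ ≤ n := by omega
        have hji : ∀ j ∈ w.support.erase i, Finsupp.single j (1:ℂ) ∈ W := by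
          intro j hj
          rcases Finset.mem_erase.mp hj with ⟨hjne, hjsup⟩
          exact ih w' hw'W hcard j (by
            rw [hco]
            exact mul_ne_zero (sub_ne_zero.mpr (fun h => hjne (cinj j i h)))
              (Finsupp.mem_support_iff.mp hjsup))
        have hsum : ∑ j ∈ w.support, Finsupp.single j (w j) = w := Finsupp.sum_single w
        have hrest : ∑ j ∈ w.support.erase i, Finsupp.single j (w j) ∈ W := by
          apply Submodule.sum_mem
          intro j hj
          have : Finsupp.single j (w j) = (w j) • Finsupp.single j (1:ℂ) := by
            rw [Finsupp.smul_single', mul_one]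
          rw [this]
          exact W.smul_mem _ (hji j hj)
        have hsingle : Finsupp.single i (w i) ∈ W := by
          have heq : Finsupp.single i (w i) =
              w - ∑ j ∈ w.support.erase i, Finsupp.single j (w j) := by
            rw [eq_sub_iff_add_eq]
            exact (Finset.add_sum_erase _ (fun j => Finsupp.single j (w j)) hiw).trans hsum
          rw [heq]
          exact W.sub_mem hw hrest
        have : (w i)⁻¹ • Finsupp.single i (w i) = Finsupp.single i (1:ℂ) := by
          rw [Finsupp.smul_single', inv_mul_cancel₀ hi]
        rw [← this]
        exact W.smul_mem _ hsingle
    -- get one basis vector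
    obtain ⟨w, hwW, hwne⟩ := Submodule.exists_mem_ne_zero_of_ne_bot hW
    obtain ⟨i0, hi0⟩ := Finsupp.ne_iff.mp hwne
    simp only [Finsupp.coe_zero, Pi.zero_apply] at hi0
    have hbase : Finsupp.single i0 (1:ℂ) ∈ W := main w.support.card w hwW le_rfl i0 hi0
    -- propagate
    have stepX : ∀ j : ℤ, Finsupp.single j (1:ℂ) ∈ W → Finsupp.single (j+1) (1:ℂ) ∈ W := by
      intro j hj
      have := hXW _ hj; rwa [hX] at this
    have stepY : ∀ j : ℤ, Finsupp.single j (1:ℂ) ∈ W → Finsupp.single (j-1) (1:ℂ) ∈ W := by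
      intro j hj
      have h1 := hYW _ hj
      rw [hY] at h1
      have h2 := W.smul_mem (p ^ j) h1
      rwa [smul_smul, ← zpow_add₀ hp, add_neg_cancel, zpow_zero, one_smul] at h2
    have hall : ∀ d : ℤ, Finsupp.single (i0 + d) (1:ℂ) ∈ W := by
      intro d
      induction d using Int.induction_on with
      | zero => simpa using hbase
      | succ k ihk => have := stepX _ ihk; rwa [add_assoc] at this
      | pred k ihk =>
        have := stepY _ ihk
        have he : i0 + -(k:ℤ) - 1 = i0 + (-(k:ℤ) - 1) := by ring
        rwa [he] at this
    have hallj : ∀ j : ℤ, Finsupp.single j (1:ℂ) ∈ W := by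
      intro j
      have := hall (j - i0)
      rwa [add_sub_cancel] at this
    rw [Submodule.eq_top_iff']
    intro w
    rw [← Finsupp.sum_single w, Finsupp.sum]
    apply Submodule.sum_mem
    intro j _
    have : Finsupp.single j (w j) = (w j) • Finsupp.single j (1:ℂ) := by
      rw [Finsupp.smul_single', mul_one]
    rw [this]
    exact W.smul_mem _ (hallj j)
end

section
/- Let ℓ ≥ 1 be an integer and let p ∈ ℂ be a primitive ℓ-th root of unity. Then there exists a simple left B_p-module whose dimension as a ℂ-vector space equals ℓ. (Proposition 2.6(2).) -/
section Aux

variable (p : ℂ) (ℓ : ℕ)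

/-- The diagonal operator `e_i ↦ p^i e_i`. -/
noncomputable def Xop : Module.End ℂ (Fin ℓ → ℂ) where
  toFun v := fun i => p ^ (i : ℕ) * v i
  map_add' v w := by funext i; simp [mul_add]
  map_smul' c v := by funext i; simp [smul_eq_mul]; ring

/-- The cyclic shift operator. -/
def Yop [NeZero ℓ] : Module.End ℂ (Fin ℓ → ℂ) where
  toFun v := fun i => v (i - 1)
  map_add' _ _ := rfl
  map_smul' _ _ := rfl

lemma Xop_Yop [NeZero ℓ] (hprim : p ^ ℓ = 1) :
    Xop p ℓ * Yop ℓ = p • (Yop ℓ * Xop p ℓ) := by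
  obtain ⟨m, rfl⟩ : ∃ m, ℓ = m + 1 := ⟨ℓ - 1, by have := NeZero.ne ℓ; omega⟩
  apply LinearMap.ext; intro v; funext i
  show p ^ (i : ℕ) * v (i - 1) = p * (p ^ ((i - 1 : Fin (m + 1)) : ℕ) * v (i - 1))
  rw [← mul_assoc]
  congr 1
  rw [Fin.coe_sub_one]
  by_cases h0 : i = 0
  · rw [if_pos h0, h0, ← pow_succ', Fin.val_zero, pow_zero, hprim]
  · rw [if_neg h0, ← pow_succ']
    congr 1
    have : (i : ℕ) ≠ 0 := fun h => h0 (Fin.ext h)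
    omega

noncomputable def φ [NeZero ℓ] (hprim : p ^ ℓ = 1) :
    QuantumPlane p →ₐ[ℂ] Module.End ℂ (Fin ℓ → ℂ) :=
  RingQuot.liftAlgHom ℂ
    ⟨FreeAlgebra.lift ℂ (fun j : Fin 2 => if j = 0 then Xop p ℓ else Yop ℓ),
     by
      rintro a b ⟨rfl, rfl⟩
      simp [Xop_Yop p ℓ hprim]⟩

end Aux

open Fin.NatCast

/-- **Proposition 2.6(2).** If `p ∈ ℂ` is a primitive `ℓ`-th root of unity (`ℓ ≥ 1`),
then there exists a simple left `B_p`-module of `ℂ`-dimension `ℓ`. -/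
theorem proposition_2_6_2 (ℓ : ℕ) (hℓ : 1 ≤ ℓ) (p : ℂ) (hp : p ≠ 0)
    (hprim : p ^ ℓ = 1) (hmin : ∀ k : ℕ, 1 ≤ k → k < ℓ → p ^ k ≠ 1) :
    ∃ (V : Type) (_ : AddCommGroup V) (_ : Module (QuantumPlane p) V)
      (_ : Module ℂ V) (_ : IsScalarTower ℂ (QuantumPlane p) V),
      IsSimpleModule (QuantumPlane p) V ∧ Module.finrank ℂ V = ℓ := by
  haveI : NeZero ℓ := ⟨by omega⟩
  set V : Type := Fin ℓ → ℂ with hV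
  letI instMod : Module (QuantumPlane p) V := Module.compHom V (φ p ℓ hprim).toRingHom
  have hsmul : ∀ (r : QuantumPlane p) (v : V), r • v = φ p ℓ hprim r v := fun r v => rfl
  letI instTower : IsScalarTower ℂ (QuantumPlane p) V :=
    ⟨fun c r v => by
      rw [hsmul, hsmul, map_smul]
      rfl⟩
  -- the generators
  set x : QuantumPlane p := RingQuot.mkAlgHom ℂ (quantumRel p) (FreeAlgebra.ι ℂ 0) with hx
  set y : QuantumPlane p := RingQuot.mkAlgHom ℂ (quantumRel p) (FreeAlgebra.ι ℂ 1) with hy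
  have hφx : φ p ℓ hprim x = Xop p ℓ := by
    rw [hx, φ, RingQuot.liftAlgHom_mkAlgHom_apply, FreeAlgebra.lift_ι_apply]
    simp
  have hφy : φ p ℓ hprim y = Yop ℓ := by
    rw [hy, φ, RingQuot.liftAlgHom_mkAlgHom_apply, FreeAlgebra.lift_ι_apply]
    simp
  have hxpow : ∀ (k : ℕ) (v : V) (j : Fin ℓ), (x ^ k • v) j = p ^ ((j : ℕ) * k) * v j := by
    intro k
    induction k with
    | zero => intro v j; simp [hsmul]
    | succ k ih =>
      intro v j
      have hsplit : x ^ (k + 1) • v = x ^ k • (x • v) := by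
        rw [← mul_smul, ← pow_succ]
      rw [hsplit, ih, hsmul, hφx]
      show p ^ ((j : ℕ) * k) * (p ^ (j : ℕ) * v j) = _
      rw [← mul_assoc, ← pow_add]
      ring_nf
  have hypow : ∀ (k : ℕ) (v : V) (j : Fin ℓ), (y ^ k • v) j = v (j - (k : Fin ℓ)) := by
    intro k
    induction k with
    | zero => intro v j; simp [hsmul]
    | succ k ih =>
      intro v j
      have hsplit : y ^ (k + 1) • v = y ^ k • (y • v) := by
        rw [← mul_smul, ← pow_succ]
      rw [hsplit, ih, hsmul, hφy]
      show v (j - (k : Fin ℓ) - 1) = v (j - ((k : ℕ) + 1 : ℕ))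
      congr 1
      push_cast
      abel
  -- closure of submodules under ℂ-scalars
  have hcs : ∀ (N : Submodule (QuantumPlane p) V) (c : ℂ) (v : V), v ∈ N → c • v ∈ N := by
    intro N c v hv
    rw [← algebraMap_smul (QuantumPlane p) c v]
    exact N.smul_mem _ hv
  have hℓC : (ℓ : ℂ) ≠ 0 := Nat.cast_ne_zero.mpr (by omega)
  -- projection onto the i-th coordinate stays in a submodule
  have hproj : ∀ (N : Submodule (QuantumPlane p) V) (v : V), v ∈ N → ∀ i : Fin ℓ,
      (Pi.single i (v i) : V) ∈ N := by
    intro N v hv i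
    have hmem : (ℓ : ℂ)⁻¹ • ∑ k ∈ Finset.range ℓ, ((p ^ (i : ℕ))⁻¹) ^ k • (x ^ k • v) ∈ N :=
      hcs N _ _ (Submodule.sum_mem N fun k _ => hcs N _ _ (N.smul_mem _ hv))
    convert hmem using 1
    funext j
    have hsum : (∑ k ∈ Finset.range ℓ, ((p ^ (i : ℕ))⁻¹) ^ k • (x ^ k • v)) j
        = (∑ k ∈ Finset.range ℓ, (p ^ (j : ℕ) * (p ^ (i : ℕ))⁻¹) ^ k) * v j := by
      rw [Finset.sum_apply, Finset.sum_mul]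
      refine Finset.sum_congr rfl fun k _ => ?_
      rw [Pi.smul_apply, hxpow k v j, smul_eq_mul, mul_pow, pow_mul]
      ring
    rw [Pi.smul_apply, hsum, smul_eq_mul]
    set q : ℂ := p ^ (j : ℕ) * (p ^ (i : ℕ))⁻¹ with hq
    by_cases hij : j = i
    · subst hij
      have hq1 : q = 1 := by
        rw [hq, mul_inv_cancel₀ (pow_ne_zero _ hp)]
      rw [Pi.single_eq_same, hq1]
      simp only [one_pow, Finset.sum_const, Finset.card_range, nsmul_eq_mul, mul_one]
      rw [← mul_assoc, inv_mul_cancel₀ hℓC, one_mul]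
    · have hq1 : q ≠ 1 := by
        intro h
        have hpj : p ^ (j : ℕ) = p ^ (i : ℕ) := by
          rw [hq, mul_inv_eq_one₀ (pow_ne_zero _ hp)] at h
          exact h
        rcases lt_or_gt_of_ne (fun h' : (j : ℕ) = (i : ℕ) => hij (Fin.ext h')) with hlt | hgt
        · have key : p ^ ((i : ℕ) - (j : ℕ)) * p ^ (j : ℕ) = 1 * p ^ (j : ℕ) := by
            rw [← pow_add, one_mul]
            have harith : (i : ℕ) - (j : ℕ) + (j : ℕ) = (i : ℕ) := by omega
            rw [harith, ← hpj]
          exact hmin _ (by omega) (by omega) (mul_right_cancel₀ (pow_ne_zero _ hp) key)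
        · have key : p ^ ((j : ℕ) - (i : ℕ)) * p ^ (i : ℕ) = 1 * p ^ (i : ℕ) := by
            rw [← pow_add, one_mul]
            have harith : (j : ℕ) - (i : ℕ) + (i : ℕ) = (j : ℕ) := by omega
            rw [harith, hpj]
          exact hmin _ (by omega) (by omega) (mul_right_cancel₀ (pow_ne_zero _ hp) key)
      have hqℓ : q ^ ℓ = 1 := by
        rw [hq, mul_pow, ← pow_mul, mul_comm (j : ℕ) ℓ, pow_mul, hprim, one_pow,
          inv_pow, ← pow_mul, mul_comm (i : ℕ) ℓ, pow_mul, hprim, one_pow, inv_one, one_mul]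
      rw [geom_sum_eq hq1, hqℓ, sub_self, zero_div, zero_mul, mul_zero,
        Pi.single_eq_of_ne hij]
  -- shifting: y^k moves single i to single (i+k)
  have hshift : ∀ (N : Submodule (QuantumPlane p) V) (i : Fin ℓ) (c : ℂ),
      (Pi.single i c : V) ∈ N → ∀ j : Fin ℓ, (Pi.single j c : V) ∈ N := by
    intro N i c hi j
    have hmem : y ^ ((j - i : Fin ℓ) : ℕ) • (Pi.single i c : V) ∈ N :=
      N.smul_mem _ hi
    convert hmem using 1
    funext m
    rw [hypow, Fin.cast_val_eq_self]
    by_cases hmj : m = j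
    · subst hmj
      rw [Pi.single_eq_same, sub_sub_cancel, Pi.single_eq_same]
    · rw [Pi.single_eq_of_ne hmj, Pi.single_eq_of_ne]
      intro h
      rw [sub_eq_iff_eq_add] at h
      exact hmj (by rw [h]; abel)
  haveI : Nontrivial V := by
    refine ⟨fun _ => 0, fun _ => 1, fun h => ?_⟩
    have := congrFun h ⟨0, by omega⟩
    simp at this
  refine ⟨V, inferInstance, instMod, inferInstance, instTower, ?_, ?_⟩
  · rw [isSimpleModule_iff]
    refine { eq_bot_or_eq_top := ?_ }
    intro N
    by_cases hN : N = ⊥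
    · exact Or.inl hN
    · right
      obtain ⟨v, hvN, hv0⟩ := (Submodule.ne_bot_iff N).mp hN
      obtain ⟨i, hi⟩ : ∃ i, v i ≠ 0 := by
        by_contra h
        push_neg at h
        exact hv0 (funext h)
      have h1 : (Pi.single i (v i) : V) ∈ N := hproj N v hvN i
      have h2 : (Pi.single i (1 : ℂ) : V) ∈ N := by
        have h3 := hcs N (v i)⁻¹ _ h1
        rwa [← Pi.single_smul, smul_eq_mul, inv_mul_cancel₀ hi] at h3
      rw [eq_top_iff]
      intro w _
      have hw : w = ∑ j : Fin ℓ, (w j) • (Pi.single j (1 : ℂ) : V) := by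
        funext m
        rw [Finset.sum_apply, Finset.sum_eq_single m]
        · simp
        · intro b _ hb
          simp [Pi.single_eq_of_ne (Ne.symm hb)]
        · simp
      rw [hw]
      exact Submodule.sum_mem N fun j _ => hcs N _ _ (hshift N i 1 h2 j)
  · exact Module.finrank_fin_fun ℂ
end

section
/- Let p be a nonzero complex number that is not a root of unity. Then every simple left B_p-module is either one-dimensional as a ℂ-vector space or infinite-dimensional as a ℂ-vector space. (Theorem 2.7(1).) -/
/-- The image of the generator `x` in the quantum plane. -/
noncomputable def QPX (p : ℂ) : QuantumPlane p :=
  RingQuot.mkAlgHom ℂ (quantumRel p) (FreeAlgebra.ι ℂ 0)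

/-- The image of the generator `y` in the quantum plane. -/
noncomputable def QPY (p : ℂ) : QuantumPlane p :=
  RingQuot.mkAlgHom ℂ (quantumRel p) (FreeAlgebra.ι ℂ 1)

lemma QP_rel (p : ℂ) : QPX p * QPY p = p • (QPY p * QPX p) := by
  have h := RingQuot.mkAlgHom_rel ℂ
    (show quantumRel p (FreeAlgebra.ι ℂ 0 * FreeAlgebra.ι ℂ 1)
        (p • (FreeAlgebra.ι ℂ 1 * FreeAlgebra.ι ℂ 0)) from ⟨rfl, rfl⟩)
  simpa [QPX, QPY, map_mul, map_smul] using h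

section act
variable (p : ℂ) {V : Type*} [AddCommGroup V] [Module (QuantumPlane p) V]
    [Module ℂ V] [IsScalarTower ℂ (QuantumPlane p) V]

/-- The action of an element of the quantum plane as a `ℂ`-linear endomorphism. -/
noncomputable def actL (r : QuantumPlane p) : V →ₗ[ℂ] V where
  toFun v := r • v
  map_add' := smul_add r
  map_smul' c v := smul_comm r c v

@[simp] lemma actL_apply (r : QuantumPlane p) (v : V) : actL p r v = r • v := rfl

/-- If a nonzero vector has its `ℂ`-span stable under `x` and `y`, then the module is
one-dimensional. -/
lemma key_span (hsimple : IsSimpleModule (QuantumPlane p) V)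
    (w : V) (hw : w ≠ 0)
    (hX : QPX p • w ∈ Submodule.span ℂ {w})
    (hY : QPY p • w ∈ Submodule.span ℂ {w}) :
    Module.finrank ℂ V = 1 := by
  set Wc : Submodule ℂ V := Submodule.span ℂ {w} with hWc
  -- the set of elements of the quantum plane preserving `Wc` is a subalgebra
  let S : Subalgebra ℂ (QuantumPlane p) :=
    { carrier := {r | ∀ v ∈ Wc, r • v ∈ Wc}
      mul_mem' := fun {a b} ha hb v hv => by
        rw [mul_smul]; exact ha _ (hb _ hv)
      add_mem' := fun {a b} ha hb v hv => by
        rw [add_smul]; exact Wc.add_mem (ha _ hv) (hb _ hv)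
      algebraMap_mem' := fun c v hv => by
        rw [algebraMap_smul]; exact Wc.smul_mem c hv }
  have hXS : QPX p ∈ S := by
    intro v hv
    obtain ⟨c, rfl⟩ := Submodule.mem_span_singleton.mp hv
    rw [smul_comm]
    exact Wc.smul_mem c hX
  have hYS : QPY p ∈ S := by
    intro v hv
    obtain ⟨c, rfl⟩ := Submodule.mem_span_singleton.mp hv
    rw [smul_comm]
    exact Wc.smul_mem c hY
  have hS : ∀ r : QuantumPlane p, r ∈ S := by
    intro r
    obtain ⟨a, rfl⟩ := RingQuot.mkAlgHom_surjective ℂ (quantumRel p) r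
    induction a using FreeAlgebra.induction with
    | grade0 c => rw [AlgHom.commutes]; exact S.algebraMap_mem c
    | grade1 i =>
      fin_cases i
      · exact hXS
      · exact hYS
    | mul a b ha hb => rw [map_mul]; exact S.mul_mem ha hb
    | add a b ha hb => rw [map_add]; exact S.add_mem ha hb
  -- hence `Wc` is a submodule over the quantum plane
  let W : Submodule (QuantumPlane p) V :=
    { carrier := (Wc : Set V)
      add_mem' := fun {a b} ha hb => Wc.add_mem ha hb
      zero_mem' := Wc.zero_mem
      smul_mem' := fun r v hv => hS r v hv }
  have hwW : w ∈ W := Submodule.mem_span_singleton_self w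
  have hWbot : W ≠ ⊥ := by
    intro h
    exact hw (by simpa [h] using hwW)
  have hWtop : W = ⊤ := (hsimple.1.2 W).resolve_left hWbot
  have hWcTop : Wc = ⊤ := by
    ext v
    simp only [Submodule.mem_top, iff_true]
    have : v ∈ W := by rw [hWtop]; trivial
    exact this
  rw [← finrank_top ℂ V, ← hWcTop]
  exact finrank_span_singleton hw

end act

/-- **Theorem 2.7(1).** If `p ∈ ℂ` is nonzero and not a root of unity, then every simple
left `B_p`-module is either one-dimensional or infinite-dimensional over `ℂ`. -/
theorem theorem_2_7_1 (p : ℂ) (hp : p ≠ 0)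
    (hroot : ∀ k : ℕ, 1 ≤ k → p ^ k ≠ 1)
    (V : Type*) [AddCommGroup V] [Module (QuantumPlane p) V]
    [Module ℂ V] [IsScalarTower ℂ (QuantumPlane p) V]
    (hsimple : IsSimpleModule (QuantumPlane p) V) :
    Module.finrank ℂ V = 1 ∨ ¬ Module.Finite ℂ V := by
  by_cases hfin : Module.Finite ℂ V
  · left
    haveI : Module.Finite ℂ V := hfin
    haveI : FiniteDimensional ℂ V := hfin
    haveI : Nontrivial V := IsSimpleModule.nontrivial (QuantumPlane p) V
    set n := Module.finrank ℂ V with hn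
    have hn1 : 1 ≤ n := Module.finrank_pos
    set f : V →ₗ[ℂ] V := actL p (QPX p) with hf
    set g : V →ₗ[ℂ] V := actL p (QPY p) with hg
    have hfg : ∀ v : V, f (g v) = p • g (f v) := by
      intro v
      simp only [hf, hg, actL_apply, ← mul_smul, QP_rel p, smul_assoc]
    have hcomp : f ∘ₗ g = p • (g ∘ₗ f) := by
      ext v
      simpa using hfg v
    have hdet : LinearMap.det f * LinearMap.det g
        = p ^ n * (LinearMap.det g * LinearMap.det f) := by
      calc LinearMap.det f * LinearMap.det g = LinearMap.det (f ∘ₗ g) :=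
            (LinearMap.det_comp f g).symm
        _ = LinearMap.det (p • (g ∘ₗ f)) := by rw [hcomp]
        _ = p ^ n * LinearMap.det (g ∘ₗ f) := by rw [LinearMap.det_smul]
        _ = p ^ n * (LinearMap.det g * LinearMap.det f) := by rw [LinearMap.det_comp]
    have hdet0 : LinearMap.det f = 0 ∨ LinearMap.det g = 0 := by
      by_contra h
      push_neg at h
      apply hroot n hn1
      have hne : LinearMap.det g * LinearMap.det f ≠ 0 := mul_ne_zero h.2 h.1
      rw [mul_comm (LinearMap.det f)] at hdet
      exact (mul_left_eq_self₀.mp hdet.symm).resolve_right hne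
    rcases hdet0 with h0 | h0
    · -- `f` has nontrivial kernel, stable under `g`
      have hker : ⊥ < LinearMap.ker f := LinearMap.bot_lt_ker_of_det_eq_zero h0
      haveI : Nontrivial (LinearMap.ker f) :=
        Submodule.nontrivial_iff_ne_bot.mpr (ne_of_gt hker)
      have hstab : ∀ v ∈ LinearMap.ker f, g v ∈ LinearMap.ker f := by
        intro v hv
        rw [LinearMap.mem_ker] at hv ⊢
        rw [hfg v, hv, map_zero, smul_zero]
      let gres : Module.End ℂ (LinearMap.ker f) := g.restrict hstab
      obtain ⟨μ, hμ⟩ := Module.End.exists_eigenvalue gres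
      obtain ⟨w', hw'⟩ := hμ.exists_hasEigenvector
      refine key_span p hsimple (w' : V) (by simpa using hw'.right) ?_ ?_
      · have : f (w' : V) = 0 := w'.2
        rw [show QPX p • (w' : V) = f (w' : V) from rfl, this]
        exact (Submodule.span ℂ {(w' : V)}).zero_mem
      · have : g (w' : V) = μ • (w' : V) := by
          have := hw'.apply_eq_smul
          exact congrArg Subtype.val this
        rw [show QPY p • (w' : V) = g (w' : V) from rfl, this]
        exact Submodule.smul_mem _ μ (Submodule.mem_span_singleton_self _)
    · -- `g` has nontrivial kernel, stable under `f`
      have hker : ⊥ < LinearMap.ker g := LinearMap.bot_lt_ker_of_det_eq_zero h0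
      haveI : Nontrivial (LinearMap.ker g) :=
        Submodule.nontrivial_iff_ne_bot.mpr (ne_of_gt hker)
      have hstab : ∀ v ∈ LinearMap.ker g, f v ∈ LinearMap.ker g := by
        intro v hv
        rw [LinearMap.mem_ker] at hv ⊢
        have h1 : f (g v) = p • g (f v) := hfg v
        rw [hv, map_zero] at h1
        have := h1.symm
        rcases smul_eq_zero.mp this with h | h
        · exact absurd h hp
        · exact h
      let fres : Module.End ℂ (LinearMap.ker g) := f.restrict hstab
      obtain ⟨μ, hμ⟩ := Module.End.exists_eigenvalue fres
      obtain ⟨w', hw'⟩ := hμ.exists_hasEigenvector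
      refine key_span p hsimple (w' : V) (by simpa using hw'.right) ?_ ?_
      · have : f (w' : V) = μ • (w' : V) := by
          have := hw'.apply_eq_smul
          exact congrArg Subtype.val this
        rw [show QPX p • (w' : V) = f (w' : V) from rfl, this]
        exact Submodule.smul_mem _ μ (Submodule.mem_span_singleton_self _)
      · have : g (w' : V) = 0 := w'.2
        rw [show QPY p • (w' : V) = g (w' : V) from rfl, this]
        exact (Submodule.span ℂ {(w' : V)}).zero_mem
  · right; exact hfin
end

section
/- Let ℓ ≥ 1 be an integer and let p ∈ ℂ be a primitive ℓ-th root of unity. Then every simple left B_p-module is finite-dimensional over ℂ, and its ℂ-dimension is either 1 or ℓ. (Theorem 2.7(2), classification of simple module dimensions.) -/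
open Module Polynomial Cardinal

section Aux

variable {V : Type*} [AddCommGroup V] [Module ℂ V]


lemma qp_aeval_X_sub_C (T : Module.End ℂ V) (a : ℂ) :
    aeval T (X - C a) = T - a • (1 : Module.End ℂ V) := by
  simp only [map_sub, aeval_X, aeval_C, Module.algebraMap_end_eq_smul_id]
  rfl

lemma qp_aeval_inj (T : Module.End ℂ V)
    (hinj : ∀ c : ℂ, Function.Injective (T - c • (1 : Module.End ℂ V)))
    (R : Polynomial ℂ) (hR : R ≠ 0) : Function.Injective (aeval T R) := by
  have hsplit : Splits R := IsAlgClosed.splits R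
  have hfact := hsplit.eq_prod_roots
  have hlc : R.leadingCoeff ≠ 0 := leadingCoeff_ne_zero.mpr hR
  rw [hfact]
  generalize R.roots = m
  induction m using Multiset.induction with
  | empty =>
      simp only [Multiset.map_zero, Multiset.prod_zero, mul_one, aeval_C]
      intro a b hab
      simp only [Module.algebraMap_end_apply] at hab
      exact smul_right_injective V hlc hab
  | cons a m ih =>
      have hsplit : C R.leadingCoeff * (Multiset.map (fun x => X - C x) (a ::ₘ m)).prod
          = (X - C a) * (C R.leadingCoeff * (Multiset.map (fun x => X - C x) m).prod) := by
        rw [Multiset.map_cons, Multiset.prod_cons]; ring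
      rw [hsplit, map_mul, qp_aeval_X_sub_C, Module.End.mul_eq_comp, LinearMap.coe_comp]
      exact (hinj a).comp ih

lemma qp_exists_scalar [Nontrivial V]
    (hrank : Module.rank ℂ V ≤ ℵ₀)
    (T : Module.End ℂ V)
    (hker : ∀ c : ℂ, LinearMap.ker (T - c • (1:Module.End ℂ V)) = ⊥ ∨
            LinearMap.ker (T - c • (1:Module.End ℂ V)) = ⊤)
    (hrange : ∀ c : ℂ, LinearMap.range (T - c • (1:Module.End ℂ V)) = ⊥ ∨
            LinearMap.range (T - c • (1:Module.End ℂ V)) = ⊤) :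
    ∃ c : ℂ, T = c • (1:Module.End ℂ V) := by
  by_contra hcon
  push_neg at hcon
  have hker' : ∀ c : ℂ, LinearMap.ker (T - c • (1:Module.End ℂ V)) = ⊥ := by
    intro c
    refine (hker c).resolve_right fun h => hcon c ?_
    have h0 : T - c • (1:Module.End ℂ V) = 0 := by
      ext v
      have : v ∈ LinearMap.ker (T - c • (1:Module.End ℂ V)) := h ▸ Submodule.mem_top
      simpa using this
    exact sub_eq_zero.mp h0
  have hinj : ∀ c : ℂ, Function.Injective (T - c • (1:Module.End ℂ V)) :=
    fun c => LinearMap.ker_eq_bot.mp (hker' c)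
  have hsurj : ∀ c : ℂ, Function.Surjective (T - c • (1:Module.End ℂ V)) := by
    intro c
    refine LinearMap.range_eq_top.mp ((hrange c).resolve_left fun h => ?_)
    have h0 : T - c • (1:Module.End ℂ V) = 0 := LinearMap.range_eq_bot.mp h
    exact hcon c (sub_eq_zero.mp h0)
  set e : ℂ → (V ≃ₗ[ℂ] V) := fun c =>
    LinearEquiv.ofBijective (T - c • (1:Module.End ℂ V)) ⟨hinj c, hsurj c⟩ with he
  obtain ⟨v₀, hv₀⟩ := exists_ne (0 : V)
  have heq : ∀ c : ℂ, (T - c • (1:Module.End ℂ V)) ((e c).symm v₀) = v₀ := by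
    intro c
    exact (e c).apply_symm_apply v₀
  -- linear independence of the family c ↦ (e c).symm v₀
  have hli : LinearIndependent ℂ (fun c : ℂ => (e c).symm v₀) := by
    rw [linearIndependent_iff']
    intro s g hsum i hi
    -- polynomials
    set Q : ℂ → Polynomial ℂ := fun c => ∏ c' ∈ s.erase c, (X - C c') with hQ
    set Rp : Polynomial ℂ := ∑ c ∈ s, C (g c) * Q c with hRp
    have hkill : aeval T Rp v₀ = 0 := by
      have hterm : ∀ c ∈ s, aeval T (∏ c' ∈ s, (X - C c')) ((e c).symm v₀)
          = aeval T (Q c) v₀ := by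
        intro c hc
        rw [← Finset.prod_erase_mul s _ hc, map_mul, Module.End.mul_apply,
          qp_aeval_X_sub_C, heq c]
      calc aeval T Rp v₀ = ∑ c ∈ s, g c • (aeval T (Q c) v₀) := by
            rw [hRp, map_sum]
            simp [LinearMap.sum_apply, aeval_C, Algebra.smul_def]
        _ = ∑ c ∈ s, g c • (aeval T (∏ c' ∈ s, (X - C c')) ((e c).symm v₀)) := by
            refine Finset.sum_congr rfl fun c hc => by rw [hterm c hc]
        _ = aeval T (∏ c' ∈ s, (X - C c')) (∑ c ∈ s, g c • (e c).symm v₀) := by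
            rw [map_sum]
            refine Finset.sum_congr rfl fun c hc => ?_
            rw [map_smul]
        _ = 0 := by rw [hsum, map_zero]
    have hRp0 : Rp = 0 := by
      by_contra hne
      exact hv₀ (qp_aeval_inj T hinj Rp hne (by simpa using hkill))
    -- evaluate at i
    have := congrArg (Polynomial.eval i) hRp0
    rw [hRp] at this
    simp only [eval_finset_sum, eval_mul, eval_C, eval_zero] at this
    rw [Finset.sum_eq_single i] at this
    · have hQi : (Q i).eval i ≠ 0 := by
        rw [hQ]
        simp only [eval_prod, eval_sub, eval_X, eval_C]
        refine Finset.prod_ne_zero_iff.mpr fun c' hc' => ?_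
        exact sub_ne_zero.mpr (Finset.ne_of_mem_erase hc').symm
      exact (mul_eq_zero.mp this).resolve_right hQi
    · intro c hc hci
      have : (Q c).eval i = 0 := by
        rw [hQ]
        simp only [eval_prod, eval_sub, eval_X, eval_C]
        exact Finset.prod_eq_zero (Finset.mem_erase.mpr ⟨Ne.symm hci, hi⟩) (by ring)
      rw [this, mul_zero]
    · intro h; exact absurd hi h
  have hcard := hli.cardinal_lift_le_rank
  rw [mk_complex] at hcard
  have hle : 𝔠 ≤ ℵ₀ := by
    have h2 := hcard.trans (Cardinal.lift_le.mpr hrank)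
    simpa using h2
  exact absurd hle (not_le.mpr aleph0_lt_continuum)

/-- If a nonzero polynomial kills a nonzero vector, `T` has an eigenvector. -/
lemma qp_exists_eigenvector (T : Module.End ℂ V) (R : Polynomial ℂ) (hR : R ≠ 0)
    (v : V) (hv : v ≠ 0) (hkill : aeval T R v = 0) :
    ∃ (μ : ℂ) (w : V), w ≠ 0 ∧ T w = μ • w := by
  by_contra hcon
  push_neg at hcon
  have hinj : ∀ c : ℂ, Function.Injective (T - c • (1 : Module.End ℂ V)) := by
    intro c
    rw [← LinearMap.ker_eq_bot, LinearMap.ker_eq_bot']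
    intro w hw
    by_contra hw0
    refine hcon c w hw0 ?_
    have := hw
    simp only [LinearMap.sub_apply, LinearMap.smul_apply, Module.End.one_apply,
      sub_eq_zero] at this
    exact this
  exact hv (qp_aeval_inj T hinj R hR (by simpa using hkill))

/-- one-dimensional case helper -/
lemma qp_dim1 [Nontrivial V] (X Y : Module.End ℂ V)
    (hstab : ∀ W : Submodule ℂ V, (∀ v ∈ W, X v ∈ W) → (∀ v ∈ W, Y v ∈ W) → W = ⊥ ∨ W = ⊤)
    (a b : ℂ) (hX : X = a • (1:Module.End ℂ V)) (hY : Y = b • (1:Module.End ℂ V)) :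
    Module.Finite ℂ V ∧ Module.finrank ℂ V = 1 := by
  obtain ⟨v₀, hv₀⟩ := exists_ne (0 : V)
  have hWtop : Submodule.span ℂ {v₀} = ⊤ := by
    refine ((hstab _ ?_ ?_).resolve_left ?_)
    · intro v hv; rw [hX]; exact Submodule.smul_mem _ a hv
    · intro v hv; rw [hY]; exact Submodule.smul_mem _ b hv
    · intro h
      exact hv₀ (by simpa [h] using Submodule.mem_span_singleton_self (R := ℂ) v₀)
  constructor
  · exact ⟨by rw [← hWtop]; exact Submodule.fg_span_singleton v₀⟩
  · refine finrank_eq_one (R := ℂ) v₀ hv₀ fun w => ?_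
    have : w ∈ Submodule.span ℂ {v₀} := hWtop ▸ Submodule.mem_top
    obtain ⟨c, hc⟩ := Submodule.mem_span_singleton.mp this
    exact ⟨c, hc⟩

lemma qp_key {ℓ : ℕ} (hℓ : 1 ≤ ℓ) {p : ℂ} (hp : p ≠ 0) (hprim : p ^ ℓ = 1)
    (hmin : ∀ k : ℕ, 1 ≤ k → k < ℓ → p ^ k ≠ 1)
    [Nontrivial V]
    (hrank : Module.rank ℂ V ≤ ℵ₀)
    (X Y : Module.End ℂ V)
    (hXY : X * Y = p • (Y * X))
    (hstab : ∀ W : Submodule ℂ V, (∀ v ∈ W, X v ∈ W) → (∀ v ∈ W, Y v ∈ W) → W = ⊥ ∨ W = ⊤) :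
    Module.Finite ℂ V ∧ (Module.finrank ℂ V = 1 ∨ Module.finrank ℂ V = ℓ) := by
  have hYX : Y * X = p⁻¹ • (X * Y) := by
    rw [hXY, smul_smul, inv_mul_cancel₀ hp, one_smul]
  -- powers
  have hXYk : ∀ k : ℕ, X * Y ^ k = (p ^ k) • (Y ^ k * X) := by
    intro k
    induction k with
    | zero => simp
    | succ k ih =>
        rw [pow_succ' Y, ← mul_assoc, hXY, smul_mul_assoc, mul_assoc, ih,
          mul_smul_comm, smul_smul, ← mul_assoc, ← pow_succ' Y, ← pow_succ' p]
  have hXkY : ∀ k : ℕ, X ^ k * Y = (p ^ k) • (Y * X ^ k) := by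
    intro k
    induction k with
    | zero => simp
    | succ k ih =>
        rw [pow_succ X, mul_assoc, hXY, mul_smul_comm, ← mul_assoc, ih,
          smul_mul_assoc, smul_smul, mul_assoc, ← pow_succ X, ← pow_succ' p]
  have hYkX : ∀ k : ℕ, Y ^ k * X = (p⁻¹ ^ k) • (X * Y ^ k) := by
    intro k
    induction k with
    | zero => simp
    | succ k ih =>
        rw [pow_succ Y, mul_assoc, hYX, mul_smul_comm, ← mul_assoc, ih,
          smul_mul_assoc, smul_smul, mul_assoc, ← pow_succ Y, ← pow_succ' p⁻¹]
  -- commuting endomorphisms are scalars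
  have scal : ∀ T : Module.End ℂ V, T * X = X * T → T * Y = Y * T →
      ∃ c : ℂ, T = c • (1:Module.End ℂ V) := by
    intro T h1 h2
    have h1' : ∀ c : ℂ, ∀ v : V, (T - c • (1:Module.End ℂ V)) (X v) =
        X ((T - c • (1:Module.End ℂ V)) v) := by
      intro c v
      have := LinearMap.ext_iff.mp h1 v
      simp only [Module.End.mul_apply] at this
      simp [this]
    have h2' : ∀ c : ℂ, ∀ v : V, (T - c • (1:Module.End ℂ V)) (Y v) =
        Y ((T - c • (1:Module.End ℂ V)) v) := by
      intro c v
      have := LinearMap.ext_iff.mp h2 v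
      simp only [Module.End.mul_apply] at this
      simp [this]
    apply qp_exists_scalar hrank
    · intro c
      apply hstab
      · intro v hv
        rw [LinearMap.mem_ker] at hv ⊢
        rw [h1' c v, hv, map_zero]
      · intro v hv
        rw [LinearMap.mem_ker] at hv ⊢
        rw [h2' c v, hv, map_zero]
    · intro c
      apply hstab
      · rintro v ⟨u, rfl⟩
        exact ⟨X u, h1' c u⟩
      · rintro v ⟨u, rfl⟩
        exact ⟨Y u, h2' c u⟩
  obtain ⟨α, hα⟩ := scal (X ^ ℓ)
    (by rw [← pow_succ, ← pow_succ'])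
    (by rw [hXkY ℓ, hprim, one_smul])
  obtain ⟨β, hβ⟩ := scal (Y ^ ℓ)
    (by rw [hYkX ℓ, inv_pow, hprim, inv_one, one_smul])
    (by rw [← pow_succ, ← pow_succ'])
  -- kernels of X and Y
  have hKX : LinearMap.ker X = ⊥ ∨ LinearMap.ker X = ⊤ := by
    apply hstab
    · intro v hv
      rw [LinearMap.mem_ker] at hv ⊢
      rw [hv, map_zero]
    · intro v hv
      rw [LinearMap.mem_ker] at hv ⊢
      have := LinearMap.ext_iff.mp hXY v
      simp only [Module.End.mul_apply, LinearMap.smul_apply] at this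
      rw [this, hv, map_zero, smul_zero]
  have hKY : LinearMap.ker Y = ⊥ ∨ LinearMap.ker Y = ⊤ := by
    apply hstab
    · intro v hv
      rw [LinearMap.mem_ker] at hv ⊢
      have := LinearMap.ext_iff.mp hYX v
      simp only [Module.End.mul_apply, LinearMap.smul_apply] at this
      rw [this, hv, map_zero, smul_zero]
    · intro v hv
      rw [LinearMap.mem_ker] at hv ⊢
      rw [hv, map_zero]
  rcases hKX with hKX | hKX
  rcases hKY with hKY | hKY
  -- main case : X, Y injective
  · have hXinj : Function.Injective X := LinearMap.ker_eq_bot.mp hKX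
    have hYinj : Function.Injective Y := LinearMap.ker_eq_bot.mp hKY
    obtain ⟨v₀, hv₀⟩ := exists_ne (0 : V)
    have hXpow : ∀ (k : ℕ) (v : V), (X ^ k) v = X^[k] v := fun k v => Module.End.pow_apply X k v
    have hYpow : ∀ (k : ℕ) (v : V), (Y ^ k) v = Y^[k] v := fun k v => Module.End.pow_apply Y k v
    have hαne : α ≠ 0 := by
      rintro rfl
      apply hv₀
      have : (X ^ ℓ) v₀ = 0 := by rw [hα]; simp
      rw [hXpow] at this
      exact hXinj.iterate ℓ (by simpa using this)
    have hβne : β ≠ 0 := by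
      rintro rfl
      apply hv₀
      have : (Y ^ ℓ) v₀ = 0 := by rw [hβ]; simp
      rw [hYpow] at this
      exact hYinj.iterate ℓ (by simpa using this)
    -- eigenvector of X
    obtain ⟨ν, w, hw, hXw⟩ := qp_exists_eigenvector X (Polynomial.X ^ ℓ - Polynomial.C α)
      (Polynomial.X_pow_sub_C_ne_zero hℓ α) v₀ hv₀
      (by
        simp only [map_sub, map_pow, Polynomial.aeval_X, Polynomial.aeval_C,
          LinearMap.sub_apply, Module.algebraMap_end_apply]
        rw [hα]
        simp)
    have hνne : ν ≠ 0 := by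
      rintro rfl
      apply hw
      apply hXinj
      rw [hXw]; simp
    -- the eigenvector family
    set f : Fin ℓ → V := fun k => (Y ^ (k:ℕ)) w with hf
    have hfne : ∀ k : Fin ℓ, f k ≠ 0 := by
      intro k hk
      apply hw
      rw [hf] at hk
      simp only at hk
      rw [hYpow] at hk
      exact hYinj.iterate _ (by simpa using hk)
    have heig : ∀ k : Fin ℓ, X (f k) = (p ^ (k:ℕ) * ν) • f k := by
      intro k
      have := LinearMap.ext_iff.mp (hXYk (k:ℕ)) w
      simp only [Module.End.mul_apply, LinearMap.smul_apply] at this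
      rw [hf]
      simp only
      rw [this, hXw, map_smul, smul_smul]
    -- distinct eigenvalues
    have hμinj : Function.Injective (fun k : Fin ℓ => p ^ (k:ℕ) * ν) := by
      have key : ∀ i j : ℕ, i < j → j < ℓ → p ^ i * ν ≠ p ^ j * ν := by
        intro i j hij hjl h
        have h1 : p ^ i = p ^ j := mul_right_cancel₀ hνne h
        have h2 : p ^ j = p ^ i * p ^ (j - i) := by
          rw [← pow_add]
          congr 1
          omega
        have h3 : p ^ (j - i) = 1 := by
          have := h1.trans h2
          field_simp at this
          exact this.symm
        exact hmin (j - i) (by omega) (by omega) h3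
      intro i j h
      simp only at h
      rcases lt_trichotomy (i:ℕ) (j:ℕ) with hlt | heq | hgt
      · exact absurd h (key _ _ hlt j.isLt)
      · exact Fin.ext heq
      · exact absurd h.symm (key _ _ hgt i.isLt)
    have hli : LinearIndependent ℂ f :=
      Module.End.eigenvectors_linearIndependent' X (fun k : Fin ℓ => p ^ (k:ℕ) * ν) hμinj f
        (fun k => ⟨Module.End.mem_eigenspace_iff.mpr (heig k), hfne k⟩)
    -- spanning
    have hWtop : Submodule.span ℂ (Set.range f) = ⊤ := by
      refine (hstab _ ?_ ?_).resolve_left ?_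
      · intro v hv
        have hmap : X v ∈ Submodule.map X (Submodule.span ℂ (Set.range f)) :=
          Submodule.mem_map_of_mem hv
        rw [Submodule.map_span] at hmap
        refine Submodule.span_le.mpr ?_ hmap
        rintro - ⟨-, ⟨k, rfl⟩, rfl⟩
        rw [heig k]
        exact Submodule.smul_mem _ _ (Submodule.subset_span ⟨k, rfl⟩)
      · intro v hv
        have hmap : Y v ∈ Submodule.map Y (Submodule.span ℂ (Set.range f)) :=
          Submodule.mem_map_of_mem hv
        rw [Submodule.map_span] at hmap
        refine Submodule.span_le.mpr ?_ hmap
        rintro - ⟨-, ⟨k, rfl⟩, rfl⟩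
        have hYf : Y (f k) = (Y ^ ((k:ℕ)+1)) w := by
          rw [hf]
          simp only
          rw [pow_succ' Y, Module.End.mul_apply]
        by_cases hk : (k:ℕ) + 1 < ℓ
        · rw [hYf]
          exact Submodule.subset_span ⟨⟨(k:ℕ)+1, hk⟩, rfl⟩
        · have hkl : (k:ℕ) + 1 = ℓ := by omega
          rw [hYf, hkl, hβ]
          have hw0 : w = f ⟨0, by omega⟩ := by rw [hf]; simp
          rw [hw0]
          simp only [LinearMap.smul_apply, Module.End.one_apply]
          exact Submodule.smul_mem _ _ (Submodule.subset_span ⟨_, rfl⟩)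
      · intro hbot
        apply hw
        have : f ⟨0, by omega⟩ ∈ Submodule.span ℂ (Set.range f) :=
          Submodule.subset_span ⟨_, rfl⟩
        rw [hbot] at this
        have hw0 : f ⟨0, by omega⟩ = w := by rw [hf]; simp
        rw [← hw0]
        simpa using this
    -- build the basis
    let b : Basis (Fin ℓ) ℂ V := Basis.mk hli (by rw [hWtop])
    have hfin : Module.Finite ℂ V := Module.Finite.of_basis b
    refine ⟨hfin, Or.inr ?_⟩
    rw [finrank_eq_card_basis b, Fintype.card_fin]
  -- case Y = 0
  · have hY0 : Y = 0 := LinearMap.ker_eq_top.mp hKY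
    obtain ⟨a, ha⟩ := scal X rfl (by rw [hY0, mul_zero, zero_mul])
    exact (qp_dim1 X Y hstab a 0 ha (by rw [hY0]; simp)).imp id Or.inl
  -- case X = 0
  · have hX0 : X = 0 := LinearMap.ker_eq_top.mp hKX
    obtain ⟨b', hb'⟩ := scal Y (by rw [hX0, mul_zero, zero_mul]) rfl
    exact (qp_dim1 X Y hstab 0 b' (by rw [hX0]; simp) hb').imp id Or.inl

end Aux

/-- **Theorem 2.7(2)** (classification of simple module dimensions).
If `p ∈ ℂ` is a primitive `ℓ`-th root of unity (`ℓ ≥ 1`), then every simple left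
`B_p`-module is finite-dimensional over `ℂ`, of dimension `1` or `ℓ`. -/
theorem theorem_2_7_2_dims (ℓ : ℕ) (hℓ : 1 ≤ ℓ) (p : ℂ) (hp : p ≠ 0)
    (hprim : p ^ ℓ = 1) (hmin : ∀ k : ℕ, 1 ≤ k → k < ℓ → p ^ k ≠ 1)
    (V : Type*) [AddCommGroup V] [Module (QuantumPlane p) V]
    [Module ℂ V] [IsScalarTower ℂ (QuantumPlane p) V]
    (hsimple : IsSimpleModule (QuantumPlane p) V) :
    Module.Finite ℂ V ∧ (Module.finrank ℂ V = 1 ∨ Module.finrank ℂ V = ℓ) := by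
  have hnt : Nontrivial V := IsSimpleModule.nontrivial (QuantumPlane p) V
  set x : QuantumPlane p := RingQuot.mkAlgHom ℂ (quantumRel p) (FreeAlgebra.ι ℂ 0) with hx
  set y : QuantumPlane p := RingQuot.mkAlgHom ℂ (quantumRel p) (FreeAlgebra.ι ℂ 1) with hy
  have hrel : x * y = p • (y * x) := by
    have h := RingQuot.mkAlgHom_rel ℂ
      (show quantumRel p (FreeAlgebra.ι ℂ 0 * FreeAlgebra.ι ℂ 1)
        (p • (FreeAlgebra.ι ℂ 1 * FreeAlgebra.ι ℂ 0)) from ⟨rfl, rfl⟩)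
    rw [map_mul, map_smul, map_mul] at h
    exact h
  have hsmul_comm : ∀ (a : QuantumPlane p) (c : ℂ) (v : V), a • (c • v) = c • (a • v) := by
    intro a c v
    rw [← algebraMap_smul (QuantumPlane p) c v, ← mul_smul, ← Algebra.commutes, mul_smul,
      algebraMap_smul]
  let X : Module.End ℂ V :=
    { toFun := fun v => x • v
      map_add' := fun u v => smul_add x u v
      map_smul' := fun c v => hsmul_comm x c v }
  let Y : Module.End ℂ V :=
    { toFun := fun v => y • v
      map_add' := fun u v => smul_add y u v
      map_smul' := fun c v => hsmul_comm y c v }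
  have hXv : ∀ v : V, X v = x • v := fun _ => rfl
  have hYv : ∀ v : V, Y v = y • v := fun _ => rfl
  have hXY : X * Y = p • (Y * X) := by
    ext v
    simp only [Module.End.mul_apply, LinearMap.smul_apply, hXv, hYv]
    rw [← mul_smul, ← mul_smul, hrel, smul_assoc]
  -- a ℂ-subspace stable under x and y is stable under all of the quantum plane
  have hact : ∀ (W : Submodule ℂ V), (∀ v ∈ W, x • v ∈ W) → (∀ v ∈ W, y • v ∈ W) →
      ∀ (f : FreeAlgebra ℂ (Fin 2)), ∀ v ∈ W, (RingQuot.mkAlgHom ℂ (quantumRel p) f) • v ∈ W := by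
    intro W h1 h2 f
    induction f using FreeAlgebra.induction with
    | grade0 c =>
        intro v hv
        rw [AlgHom.commutes, algebraMap_smul]
        exact W.smul_mem c hv
    | grade1 i =>
        intro v hv
        fin_cases i
        · exact h1 v hv
        · exact h2 v hv
    | mul f g ihf ihg =>
        intro v hv
        rw [map_mul, mul_smul]
        exact ihf _ (ihg _ hv)
    | add f g ihf ihg =>
        intro v hv
        rw [map_add, add_smul]
        exact W.add_mem (ihf _ hv) (ihg _ hv)
  have hstab : ∀ W : Submodule ℂ V, (∀ v ∈ W, X v ∈ W) → (∀ v ∈ W, Y v ∈ W) →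
      W = ⊥ ∨ W = ⊤ := by
    intro W h1 h2
    let W' : Submodule (QuantumPlane p) V :=
      { carrier := (W : Set V)
        add_mem' := fun ha hb => W.add_mem ha hb
        zero_mem' := W.zero_mem
        smul_mem' := by
          intro a v hv
          obtain ⟨f, rfl⟩ := RingQuot.mkAlgHom_surjective ℂ (quantumRel p) a
          exact hact W h1 h2 f v hv }
    have hmem : ∀ v : V, v ∈ W' ↔ v ∈ W := fun v => Iff.rfl
    rcases eq_bot_or_eq_top W' with h | h
    · left
      ext v
      rw [← hmem v, h]
      simp [Submodule.mem_bot]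
    · right
      ext v
      rw [← hmem v, h]
      simp
  -- countable rank
  obtain ⟨v₀, hv₀⟩ := exists_ne (0 : V)
  let ψ : QuantumPlane p →ₗ[ℂ] V :=
    { toFun := fun a => a • v₀
      map_add' := fun a b => add_smul a b v₀
      map_smul' := fun c a => by simpa using smul_assoc c a v₀ }
  let φ : FreeAlgebra ℂ (Fin 2) →ₗ[ℂ] V :=
    ψ ∘ₗ (RingQuot.mkAlgHom ℂ (quantumRel p)).toLinearMap
  have hφ : ∀ f : FreeAlgebra ℂ (Fin 2), φ f = (RingQuot.mkAlgHom ℂ (quantumRel p) f) • v₀ :=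
    fun f => rfl
  have hφsurj : Function.Surjective φ := by
    rw [← LinearMap.range_eq_top]
    refine (hstab _ ?_ ?_).resolve_left ?_
    · rintro v ⟨f, rfl⟩
      refine ⟨FreeAlgebra.ι ℂ 0 * f, ?_⟩
      rw [hφ, map_mul, mul_smul, ← hφ, hXv]
    · rintro v ⟨f, rfl⟩
      refine ⟨FreeAlgebra.ι ℂ 1 * f, ?_⟩
      rw [hφ, map_mul, mul_smul, ← hφ, hYv]
    · intro h
      apply hv₀
      have : φ 1 ∈ LinearMap.range φ := ⟨1, rfl⟩
      rw [h] at this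
      simpa [hφ, map_one] using this.symm ▸ (by simpa [hφ] using this)
  haveI : Countable (FreeMonoid (Fin 2)) := inferInstanceAs (Countable (List (Fin 2)))
  have hrank : Module.rank ℂ V ≤ ℵ₀ := by
    set b := FreeAlgebra.basisFreeMonoid ℂ (Fin 2) with hb
    set s : Set V := Set.range (fun w : FreeMonoid (Fin 2) => φ (b w)) with hs
    have hsp : Submodule.span ℂ s = ⊤ := by
      rw [hs]
      have : (Set.range fun w => φ (b w)) = φ '' (Set.range b) := by
        rw [← Set.range_comp]; rfl
      rw [this, ← Submodule.map_span, b.span_eq, Submodule.map_top, LinearMap.range_eq_top.mpr hφsurj]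
    calc Module.rank ℂ V = Module.rank ℂ (⊤ : Submodule ℂ V) := (rank_top ℂ V).symm
      _ = Module.rank ℂ (Submodule.span ℂ s) := by rw [hsp]
      _ ≤ #s := rank_span_le s
      _ ≤ ℵ₀ := le_aleph0_iff_set_countable.mpr (Set.countable_range _)
  exact qp_key hℓ hp hprim hmin hrank X Y hXY hstab
end

section
/- Let ℓ ≥ 1 be an integer and let p ∈ ℂ be a primitive ℓ-th root of unity. Then the quotient of B_p by the two-sided ideal generated by x^ℓ − 1 and y^ℓ − 1 is isomorphic, as a ℂ-algebra, to the full matrix algebra M_ℓ(ℂ) of ℓ×ℓ complex matrices. (Theorem 2.7(2), surjectivity and kernel of the representation φ.) -/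
/-- The generator `x` of the quantum plane. -/
noncomputable def qx (p : ℂ) : QuantumPlane p :=
  RingQuot.mkAlgHom ℂ (quantumRel p) (FreeAlgebra.ι ℂ 0)

/-- The generator `y` of the quantum plane. -/
noncomputable def qy (p : ℂ) : QuantumPlane p :=
  RingQuot.mkAlgHom ℂ (quantumRel p) (FreeAlgebra.ι ℂ 1)

/-- The relations `x^ℓ ~ 1` and `y^ℓ ~ 1`; quotienting `B_p` by the ring congruence
they generate is the quotient by the two-sided ideal generated by `x^ℓ - 1`, `y^ℓ - 1`. -/
noncomputable def unityRel (p : ℂ) (ℓ : ℕ) : QuantumPlane p → QuantumPlane p → Prop :=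
  fun a b => (a = qx p ^ ℓ ∧ b = 1) ∨ (a = qy p ^ ℓ ∧ b = 1)

set_option linter.unusedSectionVars false
set_option linter.unusedTactic false
set_option linter.unusedVariables false

open Matrix

section
variable (ℓ : ℕ) [NeZero ℓ] (p : ℂ)

noncomputable def Xmat : Matrix (Fin ℓ) (Fin ℓ) ℂ :=
  Matrix.diagonal fun j => p ^ (j : ℕ)

noncomputable def Ymat : Matrix (Fin ℓ) (Fin ℓ) ℂ :=
  Matrix.of fun i j => if i = j + 1 then 1 else 0

variable {ℓ p}

lemma pow_mod_eq (hprim : p ^ ℓ = 1) (a : ℕ) : p ^ a = p ^ (a % ℓ) := by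
  conv_lhs => rw [← Nat.div_add_mod a ℓ]
  rw [pow_add, pow_mul, hprim, one_pow, one_mul]

lemma Xmat_pow (k : ℕ) : (Xmat ℓ p) ^ k = Matrix.diagonal (fun j : Fin ℓ => p ^ (k * (j : ℕ))) := by
  have h : ((fun j : Fin ℓ => p ^ (j : ℕ)) ^ k) = fun j : Fin ℓ => p ^ (k * (j : ℕ)) := by
    funext j
    rw [Pi.pow_apply, ← pow_mul, mul_comm]
  rw [Xmat, Matrix.diagonal_pow, h]

lemma Xmat_pow_l (hprim : p ^ ℓ = 1) : (Xmat ℓ p) ^ ℓ = 1 := by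
  rw [Xmat_pow, ← Matrix.diagonal_one]
  congr 1
  funext j
  simp [pow_mul, hprim]

open Fin.NatCast in
lemma Ymat_pow (k : ℕ) : (Ymat ℓ) ^ k = Matrix.of fun i j => if i = j + (k : Fin ℓ) then 1 else 0 := by
  induction k with
  | zero => ext i j; simp [Matrix.one_apply]
  | succ n ih =>
    rw [pow_succ, ih]
    ext i j
    simp only [Matrix.mul_apply, Matrix.of_apply, Ymat, ite_mul, one_mul, zero_mul]
    have h1 : (∑ x : Fin ℓ, if i = x + (n : Fin ℓ) then if x = j + 1 then (1:ℂ) else 0 else 0)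
        = ∑ x : Fin ℓ, if x = j + 1 then (if i = x + (n : Fin ℓ) then (1:ℂ) else 0) else 0 := by
      apply Finset.sum_congr rfl
      intro x _
      by_cases h : x = j + 1 <;> by_cases h2 : i = x + (n : Fin ℓ) <;> simp [h, h2]
    rw [h1, Finset.sum_ite_eq' Finset.univ (j+1)]
    have h2 : j + 1 + (n : Fin ℓ) = j + ((n+1 : ℕ) : Fin ℓ) := by push_cast; abel
    simp [h2]

lemma Ymat_pow_l : (Ymat ℓ) ^ ℓ = 1 := by
  rw [Ymat_pow]
  ext i j
  simp [Matrix.one_apply, Fin.natCast_self]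

lemma pow_val_add_one (hprim : p ^ ℓ = 1) (j : Fin ℓ) :
    p ^ ((j + 1 : Fin ℓ) : ℕ) = p * p ^ (j : ℕ) := by
  have h : ((j + 1 : Fin ℓ) : ℕ) % ℓ = ((j : ℕ) + 1) % ℓ := by
    simp [Fin.val_add, Fin.val_one', Nat.add_mod]
  rw [pow_mod_eq hprim ((j + 1 : Fin ℓ) : ℕ), h, ← pow_mod_eq hprim, pow_succ, mul_comm]

lemma XY_rel (hprim : p ^ ℓ = 1) : Xmat ℓ p * Ymat ℓ = p • (Ymat ℓ * Xmat ℓ p) := by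
  ext i j
  simp only [Xmat, Ymat, Matrix.diagonal_mul, Matrix.mul_diagonal, Matrix.smul_apply,
    Matrix.of_apply, smul_eq_mul]
  by_cases h : i = j + 1
  · subst h
    simp only [if_pos rfl, mul_one, one_mul]
    rw [pow_val_add_one hprim]
    simp [mul_comm]
  · simp [h]
end

section
variable {ℓ : ℕ} [NeZero ℓ] {p : ℂ}

lemma std_apply (i j a b : Fin ℓ) (c : ℂ) :
    Matrix.single i j c a b = if a = i ∧ b = j then c else 0 := by
  simp only [Matrix.single, Matrix.of_apply]
  by_cases h1 : a = i <;> by_cases h2 : b = j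
  · simp [h1, h2]
  · rw [if_neg (fun h => h2 h.2.symm), if_neg (fun h => h2 h.2)]
  · rw [if_neg (fun h => h1 h.1.symm), if_neg (fun h => h1 h.1)]
  · rw [if_neg (fun h => h1 h.1.symm), if_neg (fun h => h1 h.1)]

lemma pow_ne_pow (hp : p ≠ 0) (hprim : p ^ ℓ = 1)
    (hmin : ∀ k : ℕ, 1 ≤ k → k < ℓ → p ^ k ≠ 1) {a j : Fin ℓ} (h : a ≠ j) :
    p ^ (a : ℕ) ≠ p ^ (j : ℕ) := by
  have hvne : (a : ℕ) ≠ (j : ℕ) := fun hh => h (Fin.ext hh)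
  intro heq
  rcases Nat.lt_or_ge (a : ℕ) (j : ℕ) with hlt | hge
  · have : p ^ ((j : ℕ) - (a : ℕ)) = 1 := by
      have h2 : p ^ (a : ℕ) * p ^ ((j : ℕ) - (a : ℕ)) = p ^ (a : ℕ) * 1 := by
        rw [← pow_add, Nat.add_sub_cancel' (le_of_lt hlt), mul_one, heq]
      exact mul_left_cancel₀ (pow_ne_zero _ hp) h2
    exact hmin _ (by omega) (by have := j.isLt; omega) this
  · have hlt : (j : ℕ) < (a : ℕ) := by omega
    have : p ^ ((a : ℕ) - (j : ℕ)) = 1 := by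
      have h2 : p ^ (j : ℕ) * p ^ ((a : ℕ) - (j : ℕ)) = p ^ (j : ℕ) * 1 := by
        rw [← pow_add, Nat.add_sub_cancel' (le_of_lt hlt), mul_one, heq]
      exact mul_left_cancel₀ (pow_ne_zero _ hp) h2
    exact hmin _ (by omega) (by have := a.isLt; omega) this

lemma diag_proj (hp : p ≠ 0) (hprim : p ^ ℓ = 1)
    (hmin : ∀ k : ℕ, 1 ≤ k → k < ℓ → p ^ k ≠ 1) (j : Fin ℓ) :
    (∑ k ∈ Finset.range ℓ, ((p ^ (j : ℕ))⁻¹) ^ k • (Xmat ℓ p) ^ k)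
      = (ℓ : ℂ) • Matrix.single j j 1 := by
  ext a b
  rw [Matrix.sum_apply, Matrix.smul_apply, std_apply, smul_eq_mul]
  by_cases hab : a = b
  · subst hab
    have hXk : ∀ k : ℕ, (((p ^ (j : ℕ))⁻¹) ^ k • (Xmat ℓ p) ^ k) a a
        = (p ^ (a : ℕ) * (p ^ (j : ℕ))⁻¹) ^ k := by
      intro k
      rw [Xmat_pow, Matrix.smul_apply, Matrix.diagonal_apply_eq, smul_eq_mul,
        mul_comm k (a : ℕ), pow_mul, ← mul_pow, mul_comm]
    rw [Finset.sum_congr rfl fun k _ => hXk k]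
    by_cases haj : a = j
    · subst haj
      rw [mul_inv_cancel₀ (pow_ne_zero _ hp)]
      simp
    · set r : ℂ := p ^ (a : ℕ) * (p ^ (j : ℕ))⁻¹ with hr
      have hrl : r ^ ℓ = 1 := by
        rw [hr, mul_pow, inv_pow, ← pow_mul, ← pow_mul, mul_comm (a : ℕ) ℓ, mul_comm (j : ℕ) ℓ,
          pow_mul, pow_mul, hprim, one_pow, one_pow, inv_one, mul_one]
      have hrne : r ≠ 1 := by
        intro h1
        apply pow_ne_pow hp hprim hmin haj
        rw [hr] at h1
        exact (mul_inv_eq_one₀ (pow_ne_zero _ hp)).mp h1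
      rw [geom_sum_eq hrne, hrl, sub_self, zero_div, if_neg (fun h => haj h.1), mul_zero]
  · have hz : ∀ k ∈ Finset.range ℓ, (((p ^ (j : ℕ))⁻¹) ^ k • (Xmat ℓ p) ^ k) a b = 0 := by
      intro k _
      rw [Xmat_pow]
      simp [Matrix.diagonal_apply_ne _ hab]
    rw [Finset.sum_eq_zero hz, if_neg (fun h => hab (h.1.trans h.2.symm)), mul_zero]

lemma stdBasis_eq (i j : Fin ℓ) :
    Matrix.single i j (1 : ℂ)
      = (Ymat ℓ) ^ (((i - j : Fin ℓ)) : ℕ) * Matrix.single j j 1 := by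
  ext a b
  rw [Matrix.mul_apply, Ymat_pow, std_apply]
  simp only [Matrix.of_apply, Fin.cast_val_eq_self, std_apply, ite_mul, one_mul, zero_mul]
  have h1 : (∑ m : Fin ℓ, if a = m + (i - j) then (if m = j ∧ b = j then (1:ℂ) else 0) else 0)
      = ∑ m : Fin ℓ, if m = j then (if a = m + (i - j) ∧ b = j then (1:ℂ) else 0) else 0 := by
    apply Finset.sum_congr rfl
    intro m _
    by_cases hm : m = j <;> by_cases h2 : a = m + (i - j) <;> simp [hm, h2, ite_and]
  rw [h1, Finset.sum_ite_eq' Finset.univ j]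
  have h3 : j + (i - j) = i := by abel
  simp [h3]

lemma subalgebra_top (hℓ : 1 ≤ ℓ) (hp : p ≠ 0) (hprim : p ^ ℓ = 1)
    (hmin : ∀ k : ℕ, 1 ≤ k → k < ℓ → p ^ k ≠ 1)
    (R : Subalgebra ℂ (Matrix (Fin ℓ) (Fin ℓ) ℂ))
    (hX : Xmat ℓ p ∈ R) (hY : Ymat ℓ ∈ R) : R = ⊤ := by
  have hdiag : ∀ j : Fin ℓ, Matrix.single j j (1:ℂ) ∈ R := by
    intro j
    have hsum : (∑ k ∈ Finset.range ℓ, ((p ^ (j : ℕ))⁻¹) ^ k • (Xmat ℓ p) ^ k) ∈ R :=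
      Subalgebra.sum_mem R fun k _ => Subalgebra.smul_mem R (Subalgebra.pow_mem R hX k) _
    rw [diag_proj hp hprim hmin j] at hsum
    have hlz : (ℓ : ℂ) ≠ 0 := Nat.cast_ne_zero.mpr (by omega)
    have h2 := Subalgebra.smul_mem R hsum (ℓ : ℂ)⁻¹
    rwa [smul_smul, inv_mul_cancel₀ hlz, one_smul] at h2
  have hstd : ∀ i j : Fin ℓ, Matrix.single i j (1:ℂ) ∈ R := by
    intro i j
    rw [stdBasis_eq i j]
    exact Subalgebra.mul_mem R (Subalgebra.pow_mem R hY _) (hdiag j)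
  rw [eq_top_iff]
  intro M _
  rw [Matrix.matrix_eq_sum_single M]
  apply Subalgebra.sum_mem R
  intro i _
  apply Subalgebra.sum_mem R
  intro j _
  have h4 : Matrix.single i j (M i j) = (M i j) • Matrix.single i j (1:ℂ) := by
    rw [Matrix.smul_single, smul_eq_mul, mul_one]
  rw [h4]
  exact Subalgebra.smul_mem R (hstd i j) _
end

-- quotient side
section quot
variable (p : ℂ) (ℓ : ℕ)

noncomputable def Xq : RingQuot (unityRel p ℓ) := RingQuot.mkAlgHom ℂ (unityRel p ℓ) (qx p)
noncomputable def Yq : RingQuot (unityRel p ℓ) := RingQuot.mkAlgHom ℂ (unityRel p ℓ) (qy p)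

lemma pow_mod_one {M : Type*} [Monoid M] {x : M} {n : ℕ} (h : x ^ n = 1) (a : ℕ) :
    x ^ a = x ^ (a % n) := by
  conv_lhs => rw [← Nat.div_add_mod a n]
  rw [pow_add, pow_mul, h, one_pow, one_mul]

lemma Xq_pow_l : Xq p ℓ ^ ℓ = 1 := by
  have h := RingQuot.mkAlgHom_rel ℂ (s := unityRel p ℓ) (Or.inl ⟨rfl, rfl⟩)
  simpa [Xq, _root_.map_pow, _root_.map_one] using h

lemma Yq_pow_l : Yq p ℓ ^ ℓ = 1 := by
  have h := RingQuot.mkAlgHom_rel ℂ (s := unityRel p ℓ) (Or.inr ⟨rfl, rfl⟩)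
  simpa [Yq, _root_.map_pow, _root_.map_one] using h

lemma q_rel : qx p * qy p = p • (qy p * qx p) := by
  have h := RingQuot.mkAlgHom_rel ℂ (s := quantumRel p) ⟨rfl, rfl⟩
  simpa [qx, qy, _root_.map_mul, _root_.map_smul] using h

lemma Xq_Yq_rel : Xq p ℓ * Yq p ℓ = p • (Yq p ℓ * Xq p ℓ) := by
  have h := congrArg (RingQuot.mkAlgHom ℂ (unityRel p ℓ)) (q_rel p)
  simpa [Xq, Yq, _root_.map_mul, _root_.map_smul] using h

variable {p}

lemma Yq_Xq (hp : p ≠ 0) : Yq p ℓ * Xq p ℓ = p⁻¹ • (Xq p ℓ * Yq p ℓ) := by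
  rw [Xq_Yq_rel, smul_smul, inv_mul_cancel₀ hp, one_smul]

lemma Yq_pow_Xq (hp : p ≠ 0) (b : ℕ) :
    Yq p ℓ ^ b * Xq p ℓ = (p⁻¹) ^ b • (Xq p ℓ * Yq p ℓ ^ b) := by
  induction b with
  | zero => simp
  | succ n ih =>
    calc Yq p ℓ ^ (n+1) * Xq p ℓ = Yq p ℓ ^ n * (Yq p ℓ * Xq p ℓ) := by
          rw [pow_succ, mul_assoc]
      _ = Yq p ℓ ^ n * (p⁻¹ • (Xq p ℓ * Yq p ℓ)) := by rw [Yq_Xq ℓ hp]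
      _ = p⁻¹ • (Yq p ℓ ^ n * Xq p ℓ * Yq p ℓ) := by rw [mul_smul_comm, mul_assoc]
      _ = p⁻¹ • (((p⁻¹) ^ n • (Xq p ℓ * Yq p ℓ ^ n)) * Yq p ℓ) := by rw [ih]
      _ = (p⁻¹) ^ (n+1) • (Xq p ℓ * Yq p ℓ ^ (n+1)) := by
          rw [smul_mul_assoc, smul_smul, mul_assoc, ← pow_succ, ← pow_succ']

lemma Yq_pow_Xq_pow (hp : p ≠ 0) (b a : ℕ) :
    Yq p ℓ ^ b * Xq p ℓ ^ a = (p⁻¹) ^ (b * a) • (Xq p ℓ ^ a * Yq p ℓ ^ b) := by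
  induction a with
  | zero => simp
  | succ n ih =>
    calc Yq p ℓ ^ b * Xq p ℓ ^ (n+1) = (Yq p ℓ ^ b * Xq p ℓ ^ n) * Xq p ℓ := by
          rw [pow_succ, mul_assoc]
      _ = ((p⁻¹) ^ (b * n) • (Xq p ℓ ^ n * Yq p ℓ ^ b)) * Xq p ℓ := by rw [ih]
      _ = (p⁻¹) ^ (b * n) • (Xq p ℓ ^ n * (Yq p ℓ ^ b * Xq p ℓ)) := by
          rw [smul_mul_assoc, mul_assoc]
      _ = (p⁻¹) ^ (b * n) • (Xq p ℓ ^ n * ((p⁻¹) ^ b • (Xq p ℓ * Yq p ℓ ^ b))) := by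
          rw [Yq_pow_Xq ℓ hp]
      _ = ((p⁻¹) ^ (b * n) * (p⁻¹) ^ b) • (Xq p ℓ ^ n * Xq p ℓ * Yq p ℓ ^ b) := by
          rw [mul_smul_comm, smul_smul, mul_assoc]
      _ = (p⁻¹) ^ (b * (n+1)) • (Xq p ℓ ^ (n+1) * Yq p ℓ ^ b) := by
          rw [← pow_add, ← pow_succ, Nat.mul_succ]

lemma mono_mul (hp : p ≠ 0) (i j a b : ℕ) :
    (Xq p ℓ ^ i * Yq p ℓ ^ j) * (Xq p ℓ ^ a * Yq p ℓ ^ b)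
      = (p⁻¹) ^ (j * a) • (Xq p ℓ ^ (i + a) * Yq p ℓ ^ (j + b)) := by
  have h1 : (Xq p ℓ ^ i * Yq p ℓ ^ j) * (Xq p ℓ ^ a * Yq p ℓ ^ b)
      = Xq p ℓ ^ i * ((Yq p ℓ ^ j * Xq p ℓ ^ a) * Yq p ℓ ^ b) := by
    rw [mul_assoc, mul_assoc]
  rw [h1, Yq_pow_Xq_pow ℓ hp, smul_mul_assoc, mul_smul_comm]
  congr 1
  rw [pow_add, pow_add]
  noncomm_ring
end quot


/-- **Theorem 2.7(2)** (surjectivity and kernel of `φ`). If `p ∈ ℂ` is a primitive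
`ℓ`-th root of unity (`ℓ ≥ 1`), then the quotient of `B_p` by the two-sided ideal
generated by `x^ℓ - 1` and `y^ℓ - 1` is isomorphic as a `ℂ`-algebra to `M_ℓ(ℂ)`. -/
theorem theorem_2_7_2_matrix (ℓ : ℕ) (hℓ : 1 ≤ ℓ) (p : ℂ) (hp : p ≠ 0)
    (hprim : p ^ ℓ = 1) (hmin : ∀ k : ℕ, 1 ≤ k → k < ℓ → p ^ k ≠ 1) :
    Nonempty (RingQuot (unityRel p ℓ) ≃ₐ[ℂ] Matrix (Fin ℓ) (Fin ℓ) ℂ) := by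
  haveI : NeZero ℓ := ⟨by omega⟩
  classical
  -- the representation φ
  have hrel1 : ∀ ⦃a b : FreeAlgebra ℂ (Fin 2)⦄, quantumRel p a b →
      (FreeAlgebra.lift ℂ ![Xmat ℓ p, Ymat ℓ]) a = (FreeAlgebra.lift ℂ ![Xmat ℓ p, Ymat ℓ]) b := by
    rintro a b ⟨ha, hb⟩
    subst ha; subst hb
    simp only [_root_.map_mul, _root_.map_smul, FreeAlgebra.lift_ι_apply, Matrix.cons_val_zero,
      Matrix.cons_val_one, Matrix.head_cons]
    exact XY_rel hprim
  set φ1 : QuantumPlane p →ₐ[ℂ] Matrix (Fin ℓ) (Fin ℓ) ℂ :=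
    RingQuot.liftAlgHom ℂ ⟨FreeAlgebra.lift ℂ ![Xmat ℓ p, Ymat ℓ], hrel1⟩ with hφ1
  have hφ1x : φ1 (qx p) = Xmat ℓ p := by
    rw [hφ1, qx, RingQuot.liftAlgHom_mkAlgHom_apply]
    simp [FreeAlgebra.lift_ι_apply]
  have hφ1y : φ1 (qy p) = Ymat ℓ := by
    rw [hφ1, qy, RingQuot.liftAlgHom_mkAlgHom_apply]
    simp [FreeAlgebra.lift_ι_apply]
  have hrel2 : ∀ ⦃a b : QuantumPlane p⦄, unityRel p ℓ a b → φ1 a = φ1 b := by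
    rintro a b (⟨ha, hb⟩ | ⟨ha, hb⟩) <;> subst ha <;> subst hb
    · rw [_root_.map_pow, hφ1x, _root_.map_one, Xmat_pow_l hprim]
    · rw [_root_.map_pow, hφ1y, _root_.map_one, Ymat_pow_l]
  set φ : RingQuot (unityRel p ℓ) →ₐ[ℂ] Matrix (Fin ℓ) (Fin ℓ) ℂ :=
    RingQuot.liftAlgHom ℂ ⟨φ1, hrel2⟩ with hφ
  have hφX : φ (Xq p ℓ) = Xmat ℓ p := by
    rw [hφ, Xq, RingQuot.liftAlgHom_mkAlgHom_apply, hφ1x]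
  have hφY : φ (Yq p ℓ) = Ymat ℓ := by
    rw [hφ, Yq, RingQuot.liftAlgHom_mkAlgHom_apply, hφ1y]
  -- surjectivity
  have hrange : φ.range = ⊤ :=
    subalgebra_top hℓ hp hprim hmin φ.range ⟨Xq p ℓ, hφX⟩ ⟨Yq p ℓ, hφY⟩
  have hsurj : Function.Surjective φ := by
    intro M
    have hM : M ∈ φ.range := by rw [hrange]; trivial
    exact hM
  -- spanning by the ℓ² monomials
  set f : Fin ℓ × Fin ℓ → RingQuot (unityRel p ℓ) :=
    fun ij => Xq p ℓ ^ (ij.1 : ℕ) * Yq p ℓ ^ (ij.2 : ℕ) with hf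
  set S : Submodule ℂ (RingQuot (unityRel p ℓ)) := Submodule.span ℂ (Set.range f) with hS
  have memS : ∀ a b : ℕ, Xq p ℓ ^ a * Yq p ℓ ^ b ∈ S := by
    intro a b
    rw [pow_mod_one (Xq_pow_l p ℓ) a, pow_mod_one (Yq_pow_l p ℓ) b]
    exact Submodule.subset_span
      ⟨(⟨a % ℓ, Nat.mod_lt _ (by omega)⟩, ⟨b % ℓ, Nat.mod_lt _ (by omega)⟩), rfl⟩
  have hmulS : ∀ z ∈ S, ∀ w ∈ S, z * w ∈ S := by
    intro z hz
    induction hz using Submodule.span_induction with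
    | mem x hx =>
      intro w hw
      induction hw using Submodule.span_induction with
      | mem y hy =>
        obtain ⟨ij, rfl⟩ := hx
        obtain ⟨ab, rfl⟩ := hy
        rw [hf]
        simp only
        rw [mono_mul ℓ hp]
        exact S.smul_mem _ (memS _ _)
      | zero => rw [mul_zero]; exact S.zero_mem
      | add y1 y2 hy1 hy2 ih1 ih2 => rw [mul_add]; exact S.add_mem ih1 ih2
      | smul c y hy ih => rw [mul_smul_comm]; exact S.smul_mem _ ih
    | zero => intro w hw; rw [zero_mul]; exact S.zero_mem
    | add z1 z2 hz1 hz2 ih1 ih2 =>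
      intro w hw; rw [add_mul]; exact S.add_mem (ih1 w hw) (ih2 w hw)
    | smul c z hz ih =>
      intro w hw; rw [smul_mul_assoc]; exact S.smul_mem _ (ih w hw)
  have honeS : (1 : RingQuot (unityRel p ℓ)) ∈ S := by
    have := memS 0 0; simpa using this
  have hS_top : S = ⊤ := by
    have hall : ∀ u : FreeAlgebra ℂ (Fin 2),
        (RingQuot.mkAlgHom ℂ (unityRel p ℓ)) ((RingQuot.mkAlgHom ℂ (quantumRel p)) u) ∈ S := by
      intro u
      induction u using FreeAlgebra.induction with
      | grade0 r =>
        rw [AlgHom.commutes, AlgHom.commutes, Algebra.algebraMap_eq_smul_one]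
        exact S.smul_mem _ honeS
      | grade1 x =>
        fin_cases x
        · show (RingQuot.mkAlgHom ℂ (unityRel p ℓ))
              ((RingQuot.mkAlgHom ℂ (quantumRel p)) (FreeAlgebra.ι ℂ 0)) ∈ S
          have h0 : (RingQuot.mkAlgHom ℂ (unityRel p ℓ))
              ((RingQuot.mkAlgHom ℂ (quantumRel p)) (FreeAlgebra.ι ℂ 0)) = Xq p ℓ := rfl
          rw [h0]
          simpa using memS 1 0
        · show (RingQuot.mkAlgHom ℂ (unityRel p ℓ))
              ((RingQuot.mkAlgHom ℂ (quantumRel p)) (FreeAlgebra.ι ℂ 1)) ∈ S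
          have h0 : (RingQuot.mkAlgHom ℂ (unityRel p ℓ))
              ((RingQuot.mkAlgHom ℂ (quantumRel p)) (FreeAlgebra.ι ℂ 1)) = Yq p ℓ := rfl
          rw [h0]
          simpa using memS 0 1
      | mul a b iha ihb =>
        rw [_root_.map_mul, _root_.map_mul]
        exact hmulS _ iha _ ihb
      | add a b iha ihb =>
        rw [_root_.map_add, _root_.map_add]
        exact S.add_mem iha ihb
    rw [eq_top_iff]
    intro z _
    obtain ⟨w, rfl⟩ := RingQuot.mkAlgHom_surjective ℂ (unityRel p ℓ) z
    obtain ⟨u, rfl⟩ := RingQuot.mkAlgHom_surjective ℂ (quantumRel p) w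
    exact hall u
  -- finite dimensionality and dimension bound
  haveI hfin : Module.Finite ℂ (RingQuot (unityRel p ℓ)) :=
    ⟨hS_top ▸ Submodule.fg_span (Set.finite_range f)⟩
  have hfr : Module.finrank ℂ (RingQuot (unityRel p ℓ)) ≤ ℓ * ℓ := by
    haveI := (Set.finite_range f).fintype
    have h1 := finrank_span_le_card (R := ℂ) (Set.range f)
    rw [Set.toFinset_card] at h1
    have h2 : Fintype.card ↑(Set.range f) ≤ ℓ * ℓ := by
      have := Fintype.card_range_le f
      simpa using this
    have h3 := finrank_top ℂ (RingQuot (unityRel p ℓ))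
    rw [← hS_top, hS] at h3
    rw [← h3]
    exact le_trans h1 h2
  -- injectivity
  have hmatrank : Module.finrank ℂ (Matrix (Fin ℓ) (Fin ℓ) ℂ) = ℓ * ℓ := by
    simp [Module.finrank_matrix]
  have hrk := @LinearMap.finrank_range_add_finrank_ker ℂ (RingQuot (unityRel p ℓ)) _ _ _
    (Matrix (Fin ℓ) (Fin ℓ) ℂ) _ _ _ φ.toLinearMap
  have hrl : LinearMap.range φ.toLinearMap = ⊤ := LinearMap.range_eq_top.mpr hsurj
  rw [hrl, finrank_top, hmatrank] at hrk
  have H : Module.finrank ℂ (RingQuot (unityRel p ℓ))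
      = Module.finrank ℂ (Matrix (Fin ℓ) (Fin ℓ) ℂ) := by
    rw [hmatrank]
    generalize hq : ℓ * ℓ = q at hrk hfr ⊢
    omega
  have hinj : Function.Injective φ := by
    have h := LinearMap.injective_iff_surjective_of_finrank_eq_finrank (K := ℂ)
      (V := RingQuot (unityRel p ℓ)) (V₂ := Matrix (Fin ℓ) (Fin ℓ) ℂ)
      (f := φ.toLinearMap) H
    exact h.mpr hsurj
  exact ⟨AlgEquiv.ofBijective φ ⟨hinj, hsurj⟩⟩
end

section
/- Let p be a nonzero complex number that is not a root of unity. Then B_p is not isomorphic as a ℂ-algebra to the commutative polynomial ring ℂ[x,y] in two variables. (Corollary 2.8.) -/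
/-- **Corollary 2.8.** If `p ∈ ℂ` is nonzero and not a root of unity, then the quantum
plane `B_p` is not isomorphic as a `ℂ`-algebra to the polynomial ring `ℂ[x,y]`. -/
theorem corollary_2_8 (p : ℂ) (hp : p ≠ 0)
    (hroot : ∀ k : ℕ, 1 ≤ k → p ^ k ≠ 1) :
    IsEmpty (QuantumPlane p ≃ₐ[ℂ] MvPolynomial (Fin 2) ℂ) := by
  constructor
  intro e
  have hp1 : p ≠ 1 := by
    have := hroot 1 le_rfl
    simpa using this
  -- target noncommutative model: 2×2 matrices
  set X : Matrix (Fin 2) (Fin 2) ℂ := !![p, 0; 0, 1] with hX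
  set Y : Matrix (Fin 2) (Fin 2) ℂ := !![0, 1; 0, 0] with hY
  have hXY : X * Y = p • (Y * X) := by
    ext i j
    fin_cases i <;> fin_cases j <;>
      simp [hX, hY, Matrix.mul_apply, Fin.sum_univ_two]
  let f : FreeAlgebra ℂ (Fin 2) →ₐ[ℂ] Matrix (Fin 2) (Fin 2) ℂ :=
    FreeAlgebra.lift ℂ ![X, Y]
  have hf : ∀ ⦃a b⦄, quantumRel p a b → f a = f b := by
    rintro a b ⟨ha, hb⟩
    subst ha; subst hb
    simp only [map_mul, map_smul, FreeAlgebra.lift_ι_apply, f]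
    simpa using hXY
  let F : QuantumPlane p →ₐ[ℂ] Matrix (Fin 2) (Fin 2) ℂ :=
    RingQuot.liftAlgHom ℂ ⟨f, hf⟩
  let x := RingQuot.mkAlgHom ℂ (quantumRel p) (FreeAlgebra.ι ℂ 0)
  let y := RingQuot.mkAlgHom ℂ (quantumRel p) (FreeAlgebra.ι ℂ 1)
  -- the quantum plane relation
  have hrel : x * y = p • (y * x) := by
    have := RingQuot.mkAlgHom_rel ℂ (s := quantumRel p)
      (x := FreeAlgebra.ι ℂ 0 * FreeAlgebra.ι ℂ 1)
      (y := p • (FreeAlgebra.ι ℂ 1 * FreeAlgebra.ι ℂ 0)) ⟨rfl, rfl⟩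
    simpa [x, y, map_mul, map_smul] using this
  -- commutativity transported along the isomorphism
  have hcomm : x * y = y * x := by
    apply e.injective
    simp only [map_mul]
    exact mul_comm _ _
  have h1 : p • (y * x) = y * x := hrel ▸ hcomm
  have h2 : p • (Y * X) = Y * X := by
    have := congrArg F h1
    simpa [F, x, y, map_mul, map_smul, f,
      RingQuot.liftAlgHom_mkAlgHom_apply, FreeAlgebra.lift_ι_apply] using this
  have h3 : (p • (Y * X)) 0 1 = (Y * X) 0 1 := by rw [h2]
  have h4 : (Y * X) 0 1 = 1 := by
    simp [hY, hX, Matrix.mul_apply, Fin.sum_univ_two]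
  rw [Matrix.smul_apply, h4, smul_eq_mul, mul_one] at h3
  exact hp1 h3
end

section
/- Assume additionally that r·s⁻¹ ≠ r⁻¹·s (equivalently t⁴ ≠ 1). Then the matrix K is quasi-idempotent; precisely, K² = (r s⁻¹ − r⁻¹ s − (r⁻¹ s)^{2n} + (r s⁻¹)^{2n})·(r s⁻¹ − r⁻¹ s)⁻¹·K. (Corollary 3.15.) -/
open Matrix Finset
open scoped Kronecker

/-- The `N×N` matrix unit `E_{ab}` (1-based indices; zero if an index is out of range). -/
def Eunit (F : Type*) [Field F] (n a b : ℕ) :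
    Matrix (Fin (2 * n + 1)) (Fin (2 * n + 1)) F :=
  Matrix.of fun i j => if (i : ℕ) + 1 = a ∧ (j : ℕ) + 1 = b then (1 : F) else 0

/-- The primed index `i' = 2n+2−i`. -/
def pr (n i : ℕ) : ℕ := 2 * n + 2 - i

/-- The integers `m_i`: `m_i = 2n+1−2i` for `1 ≤ i ≤ n`, `m_{n+1} = 0`,
and `m_i = 2n+3−2i` for `n+2 ≤ i ≤ 2n+1`. -/
def mwt (n i : ℕ) : ℤ :=
  if i ≤ n then 2 * (n : ℤ) + 1 - 2 * (i : ℤ)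
  else if i = n + 1 then 0
  else 2 * (n : ℤ) + 3 - 2 * (i : ℤ)

/-- The matrix `K = Σ_{i,j} t^{m_i−m_j} E_{i,j'} ⊗ E_{i',j}`. -/
noncomputable def Kmat (F : Type*) [Field F] (n : ℕ) (t : F) :
    Matrix (Fin (2 * n + 1) × Fin (2 * n + 1)) (Fin (2 * n + 1) × Fin (2 * n + 1)) F :=
  ∑ i ∈ Icc 1 (2 * n + 1), ∑ j ∈ Icc 1 (2 * n + 1),
    t ^ (mwt n i - mwt n j) • (Eunit F n i (pr n j) ⊗ₖ Eunit F n (pr n i) j)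

/-- The basic braided `R`-matrix of `U_{r,s}(so_{2n+1})` (Theorem 3.7). -/
noncomputable def Rmat (F : Type*) [Field F] (n : ℕ) (r s t : F) :
    Matrix (Fin (2 * n + 1) × Fin (2 * n + 1)) (Fin (2 * n + 1) × Fin (2 * n + 1)) F :=
  (r⁻¹ * s) • (∑ i ∈ (Icc 1 (2 * n + 1)).erase (n + 1), Eunit F n i i ⊗ₖ Eunit F n i i)
  + (r⁻¹ * s⁻¹) • (
      (∑ i ∈ Icc 1 n, ∑ j ∈ Icc (i + 1) n, Eunit F n i j ⊗ₖ Eunit F n j i)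
    + (∑ i ∈ Icc 2 n, ∑ j ∈ Icc (pr n (i - 1)) (pr n 1), Eunit F n i j ⊗ₖ Eunit F n j i)
    + (∑ i ∈ Icc 1 (n - 1), ∑ j ∈ Icc (pr n n) (pr n (i + 1)), Eunit F n j i ⊗ₖ Eunit F n i j)
    + (∑ i ∈ Icc (pr n n) (pr n 2), ∑ j ∈ Icc (i + 1) (pr n 1), Eunit F n j i ⊗ₖ Eunit F n i j))
  + (r * s) • (
      (∑ i ∈ Icc 1 n, ∑ j ∈ Icc (i + 1) n, Eunit F n j i ⊗ₖ Eunit F n i j)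
    + (∑ i ∈ Icc (pr n n) (pr n 2), ∑ j ∈ Icc (i + 1) (pr n 1), Eunit F n i j ⊗ₖ Eunit F n j i)
    + (∑ i ∈ Icc 2 n, ∑ j ∈ Icc (pr n (i - 1)) (pr n 1), Eunit F n j i ⊗ₖ Eunit F n i j)
    + (∑ i ∈ Icc 1 (n - 1), ∑ j ∈ Icc (pr n n) (pr n (i + 1)), Eunit F n i j ⊗ₖ Eunit F n j i))
  + (∑ i ∈ (Icc 1 (2 * n + 1)).erase (n + 1), Eunit F n i (n + 1) ⊗ₖ Eunit F n (n + 1) i)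
  + (∑ j ∈ (Icc 1 (2 * n + 1)).erase (n + 1), Eunit F n (n + 1) j ⊗ₖ Eunit F n j (n + 1))
  + (r * s⁻¹) • (∑ i ∈ (Icc 1 (2 * n + 1)).erase (n + 1), Eunit F n (pr n i) i ⊗ₖ Eunit F n i (pr n i))
  + (r⁻¹ * s - r * s⁻¹) • (
      (∑ i ∈ Icc 1 (2 * n + 1), ∑ j ∈ Icc 1 (i - 1), Eunit F n i i ⊗ₖ Eunit F n j j)
    - (∑ i ∈ Icc 1 (2 * n + 1), ∑ j ∈ Icc 1 (i - 1),
        t ^ (mwt n i - mwt n j) • (Eunit F n i (pr n j) ⊗ₖ Eunit F n (pr n i) j)))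
  + Eunit F n (n + 1) (n + 1) ⊗ₖ Eunit F n (n + 1) (n + 1)

section Aux
variable {F : Type*} [Field F]

lemma Eunit_mul (n a b c d : ℕ) :
    Eunit F n a b * Eunit F n c d =
      if b = c ∧ 1 ≤ b ∧ b ≤ 2 * n + 1 then Eunit F n a d else 0 := by
  ext i j
  simp only [Matrix.mul_apply, Eunit, Matrix.of_apply]
  split_ifs with h
  · obtain ⟨rfl, hb1, hb2⟩ := h
    rw [Finset.sum_eq_single (⟨b - 1, by omega⟩ : Fin (2*n+1))]
    · have hb : ((⟨b - 1, by omega⟩ : Fin (2*n+1)) : ℕ) + 1 = b := by simp; omega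
      by_cases hia : (i:ℕ)+1 = a <;> by_cases hjd : (j:ℕ)+1 = d <;>
        simp [hia, hjd, hb]
    · intro k _ hk
      have : (k:ℕ) + 1 ≠ b := by
        intro hkb; apply hk; apply Fin.ext; simp; omega
      simp [this]
    · intro hmem; exact absurd (Finset.mem_univ _) hmem
  · apply Finset.sum_eq_zero
    intro k _
    by_cases hkb : (k:ℕ)+1 = b
    · have hbc : b ≠ c := by
        intro hbceq
        exact h ⟨hbceq, by omega, by have := k.isLt; omega⟩
      have hkc : (k:ℕ)+1 ≠ c := by omega
      simp [hkc]
    · simp [hkb]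

lemma mwt_pr (n j : ℕ) (h1 : 1 ≤ j) (h2 : j ≤ 2*n+1) : mwt n (pr n j) = - mwt n j := by
  simp only [mwt, pr]
  split_ifs <;> omega

lemma Mprod (n i j k l : ℕ) (hj : j ∈ Icc 1 (2*n+1)) (hk : k ∈ Icc 1 (2*n+1)) :
    (Eunit F n i (pr n j) ⊗ₖ Eunit F n (pr n i) j) * (Eunit F n k (pr n l) ⊗ₖ Eunit F n (pr n k) l)
    = if k = pr n j then Eunit F n i (pr n l) ⊗ₖ Eunit F n (pr n i) l else 0 := by
  rw [← Matrix.mul_kronecker_mul, Eunit_mul, Eunit_mul]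
  simp only [Finset.mem_Icc] at hj hk
  by_cases h : k = pr n j
  · have h1 : pr n j = k ∧ 1 ≤ pr n j ∧ pr n j ≤ 2*n+1 :=
      ⟨h.symm, by simp only [pr]; omega, by simp only [pr]; omega⟩
    have h2 : j = pr n k ∧ 1 ≤ j ∧ j ≤ 2*n+1 := by
      refine ⟨?_, hj.1, hj.2⟩
      simp only [pr] at h ⊢; omega
    rw [if_pos h1, if_pos h2, if_pos h]
  · have h1 : ¬(pr n j = k ∧ 1 ≤ pr n j ∧ pr n j ≤ 2*n+1) := fun hc => h hc.1.symm
    rw [if_neg h1, if_neg h, Matrix.zero_kronecker]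



end Aux

section Scalar
variable {F : Type*} [Field F]

lemma fsum (q : F) (hq : q ≠ 0) (n : ℕ) :
    (q⁻¹ - q) * (1 + (∑ k ∈ Icc 1 n, q^(2*k-1)) + (∑ k ∈ Icc 1 n, (q⁻¹)^(2*k-1)))
      = q⁻¹ - q - q^(2*n) + (q⁻¹)^(2*n) := by
  induction n with
  | zero => simp
  | succ m ih =>
    rw [Finset.sum_Icc_succ_top (by omega), Finset.sum_Icc_succ_top (by omega)]
    have h1 : 2*(m+1)-1 = 2*m+1 := by omega
    rw [h1]
    have expand : (q⁻¹ - q) * (1 + ((∑ k ∈ Icc 1 m, q^(2*k-1)) + q^(2*m+1))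
        + ((∑ k ∈ Icc 1 m, (q⁻¹)^(2*k-1)) + (q⁻¹)^(2*m+1)))
        = (q⁻¹ - q) * (1 + (∑ k ∈ Icc 1 m, q^(2*k-1)) + (∑ k ∈ Icc 1 m, (q⁻¹)^(2*k-1)))
          + (q⁻¹ - q) * (q^(2*m+1) + (q⁻¹)^(2*m+1)) := by ring
    rw [expand, ih]
    have h2 : 2*(m+1) = (2*m+1)+1 := by ring
    rw [h2]
    linear_combination (q^(2*m) - (q⁻¹)^(2*m)) * (mul_inv_cancel₀ hq)

lemma sum_reflect (g : ℕ → F) (n : ℕ) : ∑ j ∈ Icc 1 n, g (n+1-j) = ∑ k ∈ Icc 1 n, g k := by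
  refine Finset.sum_nbij' (fun j => n+1-j) (fun k => n+1-k) (fun a ha => ?_) (fun a ha => ?_)
    (fun a ha => ?_) (fun a ha => ?_) (fun a ha => rfl) <;>
    simp only [Finset.mem_Icc] at * <;> omega

lemma sum_shift (g : ℕ → F) (a n : ℕ) : ∑ j ∈ Icc (a+1) (a+n), g j = ∑ k ∈ Icc 1 n, g (k + a) := by
  refine Finset.sum_nbij' (fun j => j - a) (fun k => k + a) (fun x hx => ?_) (fun x hx => ?_)
    (fun x hx => ?_) (fun x hx => ?_) (fun x hx => ?_) <;>
    simp only [Finset.mem_Icc] at * <;> first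
      | omega
      | (congr 1; omega)

lemma Ssum (q : F) (hq : q ≠ 0) (n : ℕ) :
    ∑ j ∈ Icc 1 (2*n+1), q ^ (-mwt n j)
      = 1 + (∑ k ∈ Icc 1 n, q^(2*k-1)) + (∑ k ∈ Icc 1 n, (q⁻¹)^(2*k-1)) := by
  have e0 : Icc 1 (2*n+1) = Ioc 0 (2*n+1) := Finset.Icc_add_one_left_eq_Ioc 0 _
  rw [e0, ← Finset.sum_Ioc_consecutive _ (by omega : 0 ≤ n+1) (by omega : n+1 ≤ 2*n+1),
      ← Finset.sum_Ioc_consecutive _ (by omega : 0 ≤ n) (by omega : n ≤ n+1)]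
  have emid : ∑ j ∈ Ioc n (n+1), q ^ (-mwt n j) = 1 := by
    have : Ioc n (n+1) = {n+1} := by
      ext x; simp only [Finset.mem_Ioc, Finset.mem_singleton]; omega
    rw [this, Finset.sum_singleton]
    have : mwt n (n+1) = 0 := by simp [mwt]
    rw [this]; simp
  have eleft : ∑ j ∈ Ioc 0 n, q ^ (-mwt n j) = ∑ k ∈ Icc 1 n, (q⁻¹)^(2*k-1) := by
    rw [← Finset.Icc_add_one_left_eq_Ioc 0 n]
    rw [← sum_reflect (fun k => (q⁻¹)^(2*k-1)) n]
    refine Finset.sum_congr rfl fun j hj => ?_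
    simp only [Finset.mem_Icc] at hj
    have hm : -mwt n j = -((2*(n+1-j)-1 : ℕ) : ℤ) := by
      simp only [mwt]
      split_ifs <;> omega
    rw [hm, _root_.zpow_neg, zpow_natCast, ← inv_pow]
  have eright : ∑ j ∈ Ioc (n+1) (2*n+1), q ^ (-mwt n j) = ∑ k ∈ Icc 1 n, q^(2*k-1) := by
    have : Ioc (n+1) (2*n+1) = Icc ((n+1)+1) ((n+1)+n) := by
      rw [Finset.Icc_add_one_left_eq_Ioc]
      congr 1; omega
    rw [this, sum_shift (fun j => q ^ (-mwt n j)) (n+1) n]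
    refine Finset.sum_congr rfl fun k hk => ?_
    simp only [Finset.mem_Icc] at hk
    have hm : -mwt n (k + (n+1)) = ((2*k-1 : ℕ) : ℤ) := by
      simp only [mwt]
      split_ifs <;> omega
    rw [hm, zpow_natCast]
  rw [emid, eleft, eright]
  ring

end Scalar

/-- **Corollary 3.15** (first part). If `r s⁻¹ ≠ r⁻¹ s`, the matrix `K` is
quasi-idempotent:
`K² = (r s⁻¹ − r⁻¹ s − (r⁻¹ s)^{2n} + (r s⁻¹)^{2n}) (r s⁻¹ − r⁻¹ s)⁻¹ • K`. -/
theorem corollary_3_15_K_quasiIdempotent (n : ℕ) (hn : 1 ≤ n)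
    (F : Type*) [Field F] (r s t : F)
    (hr : r ≠ 0) (hs : s ≠ 0) (ht : t ≠ 0) (hts : t ^ 2 = r⁻¹ * s)
    (hne : r * s⁻¹ ≠ r⁻¹ * s) :
    Kmat F n t * Kmat F n t =
      ((r * s⁻¹ - r⁻¹ * s - (r⁻¹ * s) ^ (2 * n) + (r * s⁻¹) ^ (2 * n))
          * (r * s⁻¹ - r⁻¹ * s)⁻¹) • Kmat F n t := by
  classical
  set I : Finset ℕ := Icc 1 (2*n+1) with hI
  have hprmem : ∀ j ∈ I, pr n j ∈ I := by
    intro j hj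
    simp only [hI, Finset.mem_Icc, pr] at *
    omega
  have key : Kmat F n t * Kmat F n t =
      (∑ k ∈ I, t ^ ((2 : ℤ) * mwt n k)) • Kmat F n t := by
    calc Kmat F n t * Kmat F n t
        = ∑ k ∈ I, ∑ l ∈ I, ∑ i ∈ I, ∑ j ∈ I,
            (t ^ (mwt n k - mwt n l) * t ^ (mwt n i - mwt n j)) •
              ((Eunit F n i (pr n j) ⊗ₖ Eunit F n (pr n i) j) *
               (Eunit F n k (pr n l) ⊗ₖ Eunit F n (pr n k) l)) := by
          simp only [hI, Kmat, Finset.sum_mul, Finset.mul_sum, Finset.smul_sum,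
            smul_mul_assoc, mul_smul_comm, smul_smul]
      _ = ∑ k ∈ I, ∑ l ∈ I, ∑ i ∈ I,
            (t ^ (mwt n k - mwt n l) * t ^ (mwt n i - mwt n (pr n k))) •
              (Eunit F n i (pr n l) ⊗ₖ Eunit F n (pr n i) l) := by
          refine Finset.sum_congr rfl fun k hk => Finset.sum_congr rfl fun l hl =>
            Finset.sum_congr rfl fun i hi => ?_
          have step : ∀ j ∈ I,
              (t ^ (mwt n k - mwt n l) * t ^ (mwt n i - mwt n j)) •
                ((Eunit F n i (pr n j) ⊗ₖ Eunit F n (pr n i) j) *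
                 (Eunit F n k (pr n l) ⊗ₖ Eunit F n (pr n k) l))
              = if j = pr n k then
                  (t ^ (mwt n k - mwt n l) * t ^ (mwt n i - mwt n j)) •
                    (Eunit F n i (pr n l) ⊗ₖ Eunit F n (pr n i) l) else 0 := by
            intro j hj
            rw [Mprod n i j k l hj hk, smul_ite, smul_zero]
            have hiff : (k = pr n j) ↔ (j = pr n k) := by
              simp only [hI, Finset.mem_Icc] at hj hk
              simp only [pr]
              omega
            simp only [hiff]
          rw [Finset.sum_congr rfl step, Finset.sum_ite_eq' I (pr n k),
            if_pos (hprmem k hk)]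
      _ = ∑ k ∈ I, ∑ l ∈ I, ∑ i ∈ I,
            (t ^ ((2:ℤ) * mwt n k) * t ^ (mwt n i - mwt n l)) •
              (Eunit F n i (pr n l) ⊗ₖ Eunit F n (pr n i) l) := by
          refine Finset.sum_congr rfl fun k hk => Finset.sum_congr rfl fun l hl =>
            Finset.sum_congr rfl fun i hi => ?_
          have hk' : 1 ≤ k ∧ k ≤ 2*n+1 := by simpa [hI, Finset.mem_Icc] using hk
          rw [mwt_pr n k hk'.1 hk'.2, ← zpow_add₀ ht, ← zpow_add₀ ht]
          congr 1
          ring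
      _ = (∑ k ∈ I, t ^ ((2 : ℤ) * mwt n k)) • Kmat F n t := by
          rw [Finset.sum_smul]
          refine Finset.sum_congr rfl fun k hk => ?_
          rw [Kmat, Finset.smul_sum, Finset.sum_comm]
          refine Finset.sum_congr rfl fun l hl => ?_
          rw [Finset.smul_sum]
          exact Finset.sum_congr rfl fun i hi => (smul_smul _ _ _).symm
  rw [key]
  congr 1
  have hq : (r⁻¹ * s) ≠ 0 := by simp [hr, hs]
  have hqinv : (r⁻¹ * s)⁻¹ = r * s⁻¹ := by rw [mul_inv, inv_inv]
  set q : F := r⁻¹ * s with hqdef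
  have hexp : ∀ j : ℕ, t ^ ((2 : ℤ) * mwt n j) = q ^ (mwt n j) := by
    intro j
    rw [_root_.zpow_mul, show (2:ℤ) = ((2:ℕ):ℤ) from rfl, zpow_natCast, hts]
  have hflip : ∑ j ∈ I, q ^ (mwt n j) = ∑ j ∈ I, q ^ (-mwt n j) := by
    refine Finset.sum_nbij' (fun j => pr n j) (fun j => pr n j)
      (fun a ha => hprmem a ha) (fun a ha => hprmem a ha)
      (fun a ha => ?_) (fun a ha => ?_) (fun a ha => ?_)
    · simp only [hI, Finset.mem_Icc] at ha; simp only [pr]; omega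
    · simp only [hI, Finset.mem_Icc] at ha; simp only [pr]; omega
    · simp only [hI, Finset.mem_Icc] at ha
      rw [mwt_pr n a ha.1 ha.2, neg_neg]
  have hS : ∑ k ∈ I, t ^ ((2 : ℤ) * mwt n k)
      = 1 + (∑ k ∈ Icc 1 n, q^(2*k-1)) + (∑ k ∈ Icc 1 n, (q⁻¹)^(2*k-1)) := by
    rw [Finset.sum_congr rfl fun j _ => hexp j, hflip]
    exact Ssum q hq n
  rw [hS]
  have hd : r * s⁻¹ - q ≠ 0 := by
    rw [← hqinv]
    intro h
    exact hne (by rw [← hqinv]; linear_combination h)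
  rw [eq_mul_inv_iff_mul_eq₀ hd]
  calc (1 + (∑ k ∈ Icc 1 n, q^(2*k-1)) + (∑ k ∈ Icc 1 n, (q⁻¹)^(2*k-1))) * (r * s⁻¹ - q)
      = (q⁻¹ - q) * (1 + (∑ k ∈ Icc 1 n, q^(2*k-1)) + (∑ k ∈ Icc 1 n, (q⁻¹)^(2*k-1))) := by
        rw [← hqinv]; ring
    _ = q⁻¹ - q - q^(2*n) + (q⁻¹)^(2*n) := fsum q hq n
    _ = r * s⁻¹ - q - q ^ (2 * n) + (r * s⁻¹) ^ (2 * n) := by rw [hqinv]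
end

section
/- Set r_i := r² and s_i := s² for 1 ≤ i ≤ n−1, and r_n := r, s_n := s. Then for all 1 ≤ i, j ≤ n one has the commutator identity E_i·F_j − F_j·E_i = δ_{ij}·(r_i − s_i)⁻¹·(Ω_i − Ω'_i). (Part of the verification in Lemma 3.1 that the explicit matrices give the vector representation of U_{r,s}(so_{2n+1}).) -/
open Matrix Finset
open scoped Kronecker

/-- The matrix `E_i` of the vector representation: `E_i = E_{i,i+1} − (rs)⁻¹ E_{(i+1)',i'}`
for `1 ≤ i ≤ n−1`, and `E_n = w((uv)⁻¹ E_{n,n+1} − r⁻¹ E_{n+1,n'})`. -/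
noncomputable def Emat (F : Type*) [Field F] (n : ℕ) (u v w r s : F) (i : ℕ) :
    Matrix (Fin (2 * n + 1)) (Fin (2 * n + 1)) F :=
  if i = n then w • ((u * v)⁻¹ • Eunit F n n (n + 1) - r⁻¹ • Eunit F n (n + 1) (pr n n))
  else Eunit F n i (i + 1) - (r * s)⁻¹ • Eunit F n (pr n (i + 1)) (pr n i)

/-- The matrix `F_i` of the vector representation: `F_i = E_{i+1,i} − (rs)⁻¹ E_{i',(i+1)'}`
for `1 ≤ i ≤ n−1`, and `F_n = w((uv)⁻¹ E_{n+1,n} − s⁻¹ E_{n',n+1})`. -/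
noncomputable def Fmat (F : Type*) [Field F] (n : ℕ) (u v w r s : F) (i : ℕ) :
    Matrix (Fin (2 * n + 1)) (Fin (2 * n + 1)) F :=
  if i = n then w • ((u * v)⁻¹ • Eunit F n (n + 1) n - s⁻¹ • Eunit F n (pr n n) (n + 1))
  else Eunit F n (i + 1) i - (r * s)⁻¹ • Eunit F n (pr n i) (pr n (i + 1))

/-- The diagonal matrix `Ω_i` of the vector representation. -/
noncomputable def Om (F : Type*) [Field F] (n : ℕ) (r s : F) (i : ℕ) :
    Matrix (Fin (2 * n + 1)) (Fin (2 * n + 1)) F :=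
  if i = n then
    (r * s⁻¹) • Eunit F n n n + Eunit F n (n + 1) (n + 1)
    + (r⁻¹ * s) • Eunit F n (pr n n) (pr n n)
    + (r * s)⁻¹ • ∑ j ∈ Icc 1 (n - 1), Eunit F n j j
    + (r * s) • ∑ j ∈ Icc (n + 3) (2 * n + 1), Eunit F n j j
  else
    r ^ 2 • Eunit F n i i + s ^ 2 • Eunit F n (i + 1) (i + 1)
    + (s ^ 2)⁻¹ • Eunit F n (pr n (i + 1)) (pr n (i + 1))
    + (r ^ 2)⁻¹ • Eunit F n (pr n i) (pr n i)
    + ∑ j ∈ ((((Icc 1 (2 * n + 1)).erase i).erase (i + 1)).erase (pr n (i + 1))).erase (pr n i),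
        Eunit F n j j

/-- The diagonal matrix `Ω'_i` of the vector representation. -/
noncomputable def Om' (F : Type*) [Field F] (n : ℕ) (r s : F) (i : ℕ) :
    Matrix (Fin (2 * n + 1)) (Fin (2 * n + 1)) F :=
  if i = n then
    (r⁻¹ * s) • Eunit F n n n + Eunit F n (n + 1) (n + 1)
    + (r * s⁻¹) • Eunit F n (pr n n) (pr n n)
    + (r * s)⁻¹ • ∑ j ∈ Icc 1 (n - 1), Eunit F n j j
    + (r * s) • ∑ j ∈ Icc (n + 3) (2 * n + 1), Eunit F n j j
  else
    s ^ 2 • Eunit F n i i + r ^ 2 • Eunit F n (i + 1) (i + 1)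
    + (r ^ 2)⁻¹ • Eunit F n (pr n (i + 1)) (pr n (i + 1))
    + (s ^ 2)⁻¹ • Eunit F n (pr n i) (pr n i)
    + ∑ j ∈ ((((Icc 1 (2 * n + 1)).erase i).erase (i + 1)).erase (pr n (i + 1))).erase (pr n i),
        Eunit F n j j

lemma Eunit_mul_ne (F : Type*) [Field F] (n a b c d : ℕ) (h : b ≠ c) :
    Eunit F n a b * Eunit F n c d = 0 := by
  ext i j
  simp only [Eunit, Matrix.mul_apply, Matrix.of_apply, Matrix.zero_apply]
  apply Finset.sum_eq_zero
  intro k _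
  split_ifs with h1 h2
  · exact absurd (h1.2.symm.trans h2.1) h
  all_goals simp

lemma Eunit_mul_eq (F : Type*) [Field F] (n a b d : ℕ) (h1 : 1 ≤ b) (h2 : b ≤ 2*n+1) :
    Eunit F n a b * Eunit F n b d = Eunit F n a d := by
  ext i j
  simp only [Eunit, Matrix.mul_apply, Matrix.of_apply]
  rw [Finset.sum_eq_single (⟨b - 1, by omega⟩ : Fin (2*n+1))]
  · have : (b - 1) + 1 = b := by omega
    simp only [this]
    split_ifs <;> simp_all
  · intro k _ hk
    have : (k : ℕ) + 1 ≠ b := by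
      intro hh; apply hk; ext; simp; omega
    simp [this]
  · simp


/-- **Part of Lemma 3.1.** With `r_i = r²`, `s_i = s²` for `1 ≤ i ≤ n−1` and
`r_n = r`, `s_n = s`, one has `E_i F_j − F_j E_i = δ_{ij} (r_i − s_i)⁻¹ (Ω_i − Ω'_i)`
for all `1 ≤ i, j ≤ n`. -/
theorem lemma_3_1_commutator (n : ℕ) (hn : 1 ≤ n)
    (F : Type*) [Field F] (u v w r s : F)
    (hu : u ≠ 0) (hv : v ≠ 0) (hw : w ≠ 0)
    (hr : r = u ^ 2) (hs : s = v ^ 2) (hw2 : w ^ 2 = r + s) (hrs : r ^ 2 ≠ s ^ 2) :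
    ∀ i j : ℕ, 1 ≤ i → i ≤ n → 1 ≤ j → j ≤ n →
      Emat F n u v w r s i * Fmat F n u v w r s j
          - Fmat F n u v w r s j * Emat F n u v w r s i
        = (if i = j then
              ((if i = n then r else r ^ 2) - (if i = n then s else s ^ 2))⁻¹
            else 0) • (Om F n r s i - Om' F n r s i) := by
  intro i j hi1 hi2 hj1 hj2
  have hr0 : r ≠ 0 := by rw [hr]; exact pow_ne_zero 2 hu
  have hs0 : s ≠ 0 := by rw [hs]; exact pow_ne_zero 2 hv
  have hrssub : r - s ≠ 0 := by
    intro h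
    exact hrs (by rw [sub_eq_zero] at h; rw [h])
  by_cases hij : i = j
  · subst hij
    by_cases hin : i = n
    · subst hin
      have hp : pr i i = i + 2 := by unfold pr; omega
      have m1 : Eunit F i i (i+1) * Eunit F i (i+1) i = Eunit F i i i :=
        Eunit_mul_eq _ _ _ _ _ (by omega) (by omega)
      have m2 : Eunit F i i (i+1) * Eunit F i (i+2) (i+1) = 0 :=
        Eunit_mul_ne _ _ _ _ _ _ (by omega)
      have m3 : Eunit F i (i+1) (i+2) * Eunit F i (i+1) i = 0 :=
        Eunit_mul_ne _ _ _ _ _ _ (by omega)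
      have m4 : Eunit F i (i+1) (i+2) * Eunit F i (i+2) (i+1) = Eunit F i (i+1) (i+1) :=
        Eunit_mul_eq _ _ _ _ _ (by omega) (by omega)
      have m5 : Eunit F i (i+1) i * Eunit F i i (i+1) = Eunit F i (i+1) (i+1) :=
        Eunit_mul_eq _ _ _ _ _ (by omega) (by omega)
      have m6 : Eunit F i (i+1) i * Eunit F i (i+1) (i+2) = 0 :=
        Eunit_mul_ne _ _ _ _ _ _ (by omega)
      have m7 : Eunit F i (i+2) (i+1) * Eunit F i i (i+1) = 0 :=
        Eunit_mul_ne _ _ _ _ _ _ (by omega)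
      have m8 : Eunit F i (i+2) (i+1) * Eunit F i (i+1) (i+2) = Eunit F i (i+2) (i+2) :=
        Eunit_mul_eq _ _ _ _ _ (by omega) (by omega)
      simp only [Emat, Fmat, Om, Om', eq_self_iff_true, if_true, hp, smul_sub, sub_mul,
        mul_sub, Matrix.smul_mul, Matrix.mul_smul, smul_smul, m1, m2, m3, m4, m5, m6, m7, m8,
        smul_zero, sub_zero, zero_sub]
      match_scalars
      have hus : u ^ 2 - v ^ 2 ≠ 0 := by rw [hr, hs] at hrssub; exact hrssub
      have hus2 : u ^ 2 * (u ^ 2 - v ^ 2) ≠ 0 := mul_ne_zero (pow_ne_zero 2 hu) hus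
      have hus3 : v ^ 2 * (u ^ 2 - v ^ 2) ≠ 0 := mul_ne_zero (pow_ne_zero 2 hv) hus
      all_goals (field_simp; try rw [hr, hs]; try rw [hr, hs] at hw2)
      all_goals first
        | ring1
        | linear_combination (u ^ 2 * v ^ 2 * (u ^ 2 - v ^ 2) ^ 2) * hw2
        | linear_combination (-(u ^ 2 * v ^ 2 * (u ^ 2 - v ^ 2) ^ 2)) * hw2
        | linear_combination (u ^ 2 * v ^ 2 * (u ^ 2 - v ^ 2)) * hw2
        | linear_combination (-(u ^ 2 - v ^ 2)) * hw2
    · have hrs2 : r ^ 2 - s ^ 2 ≠ 0 := sub_ne_zero.mpr hrs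
      have a1 : Eunit F n i (i+1) * Eunit F n (i+1) i = Eunit F n i i :=
        Eunit_mul_eq _ _ _ _ _ (by omega) (by omega)
      have a2 : Eunit F n i (i+1) * Eunit F n (pr n i) (pr n (i+1)) = 0 :=
        Eunit_mul_ne _ _ _ _ _ _ (by unfold pr; omega)
      have a3 : Eunit F n (pr n (i+1)) (pr n i) * Eunit F n (i+1) i = 0 :=
        Eunit_mul_ne _ _ _ _ _ _ (by unfold pr; omega)
      have a4 : Eunit F n (pr n (i+1)) (pr n i) * Eunit F n (pr n i) (pr n (i+1))
          = Eunit F n (pr n (i+1)) (pr n (i+1)) :=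
        Eunit_mul_eq _ _ _ _ _ (by unfold pr; omega) (by unfold pr; omega)
      have a5 : Eunit F n (i+1) i * Eunit F n i (i+1) = Eunit F n (i+1) (i+1) :=
        Eunit_mul_eq _ _ _ _ _ (by omega) (by omega)
      have a6 : Eunit F n (i+1) i * Eunit F n (pr n (i+1)) (pr n i) = 0 :=
        Eunit_mul_ne _ _ _ _ _ _ (by unfold pr; omega)
      have a7 : Eunit F n (pr n i) (pr n (i+1)) * Eunit F n i (i+1) = 0 :=
        Eunit_mul_ne _ _ _ _ _ _ (by unfold pr; omega)
      have a8 : Eunit F n (pr n i) (pr n (i+1)) * Eunit F n (pr n (i+1)) (pr n i)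
          = Eunit F n (pr n i) (pr n i) :=
        Eunit_mul_eq _ _ _ _ _ (by unfold pr; omega) (by unfold pr; omega)
      simp only [Emat, Fmat, Om, Om', if_neg hin, eq_self_iff_true, if_true, smul_sub, sub_mul,
        mul_sub, Matrix.smul_mul, Matrix.mul_smul, smul_smul, a1, a2, a3, a4, a5, a6, a7, a8,
        smul_zero, sub_zero, zero_sub]
      match_scalars
      all_goals field_simp
      all_goals try ring1
  · rw [if_neg hij, zero_smul]
    by_cases hin : i = n
    · subst hin
      have z1 : Eunit F i i (i+1) * Eunit F i (j+1) j = 0 :=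
        Eunit_mul_ne _ _ _ _ _ _ (by omega)
      have z2 : Eunit F i i (i+1) * Eunit F i (pr i j) (pr i (j+1)) = 0 :=
        Eunit_mul_ne _ _ _ _ _ _ (by unfold pr; omega)
      have z3 : Eunit F i (i+1) (pr i i) * Eunit F i (j+1) j = 0 :=
        Eunit_mul_ne _ _ _ _ _ _ (by unfold pr; omega)
      have z4 : Eunit F i (i+1) (pr i i) * Eunit F i (pr i j) (pr i (j+1)) = 0 :=
        Eunit_mul_ne _ _ _ _ _ _ (by unfold pr; omega)
      have z5 : Eunit F i (j+1) j * Eunit F i i (i+1) = 0 :=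
        Eunit_mul_ne _ _ _ _ _ _ (by omega)
      have z6 : Eunit F i (j+1) j * Eunit F i (i+1) (pr i i) = 0 :=
        Eunit_mul_ne _ _ _ _ _ _ (by omega)
      have z7 : Eunit F i (pr i j) (pr i (j+1)) * Eunit F i i (i+1) = 0 :=
        Eunit_mul_ne _ _ _ _ _ _ (by unfold pr; omega)
      have z8 : Eunit F i (pr i j) (pr i (j+1)) * Eunit F i (i+1) (pr i i) = 0 :=
        Eunit_mul_ne _ _ _ _ _ _ (by unfold pr; omega)
      simp only [Emat, Fmat, eq_self_iff_true, if_true, if_neg (show ¬ j = i by omega),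
        smul_sub, sub_mul, mul_sub, Matrix.smul_mul, Matrix.mul_smul, smul_smul,
        z1, z2, z3, z4, z5, z6, z7, z8, smul_zero, sub_zero, zero_sub, sub_self, neg_zero,
        sub_neg_eq_add, zero_add, add_zero]
    · by_cases hjn : j = n
      · subst hjn
        have y1 : Eunit F j i (i+1) * Eunit F j (j+1) j = 0 :=
          Eunit_mul_ne _ _ _ _ _ _ (by omega)
        have y2 : Eunit F j i (i+1) * Eunit F j (pr j j) (j+1) = 0 :=
          Eunit_mul_ne _ _ _ _ _ _ (by unfold pr; omega)
        have y3 : Eunit F j (pr j (i+1)) (pr j i) * Eunit F j (j+1) j = 0 :=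
          Eunit_mul_ne _ _ _ _ _ _ (by unfold pr; omega)
        have y4 : Eunit F j (pr j (i+1)) (pr j i) * Eunit F j (pr j j) (j+1) = 0 :=
          Eunit_mul_ne _ _ _ _ _ _ (by unfold pr; omega)
        have y5 : Eunit F j (j+1) j * Eunit F j i (i+1) = 0 :=
          Eunit_mul_ne _ _ _ _ _ _ (by omega)
        have y6 : Eunit F j (j+1) j * Eunit F j (pr j (i+1)) (pr j i) = 0 :=
          Eunit_mul_ne _ _ _ _ _ _ (by unfold pr; omega)
        have y7 : Eunit F j (pr j j) (j+1) * Eunit F j i (i+1) = 0 :=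
          Eunit_mul_ne _ _ _ _ _ _ (by omega)
        have y8 : Eunit F j (pr j j) (j+1) * Eunit F j (pr j (i+1)) (pr j i) = 0 :=
          Eunit_mul_ne _ _ _ _ _ _ (by unfold pr; omega)
        simp only [Emat, Fmat, eq_self_iff_true, if_true, if_neg hin,
          smul_sub, sub_mul, mul_sub, Matrix.smul_mul, Matrix.mul_smul, smul_smul,
          y1, y2, y3, y4, y5, y6, y7, y8, smul_zero, sub_zero, zero_sub, sub_self, neg_zero,
          sub_neg_eq_add, zero_add, add_zero]
      · have x1 : Eunit F n i (i+1) * Eunit F n (j+1) j = 0 :=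
          Eunit_mul_ne _ _ _ _ _ _ (by omega)
        have x2 : Eunit F n i (i+1) * Eunit F n (pr n j) (pr n (j+1)) = 0 :=
          Eunit_mul_ne _ _ _ _ _ _ (by unfold pr; omega)
        have x3 : Eunit F n (pr n (i+1)) (pr n i) * Eunit F n (j+1) j = 0 :=
          Eunit_mul_ne _ _ _ _ _ _ (by unfold pr; omega)
        have x4 : Eunit F n (pr n (i+1)) (pr n i) * Eunit F n (pr n j) (pr n (j+1)) = 0 :=
          Eunit_mul_ne _ _ _ _ _ _ (by unfold pr; omega)
        have x5 : Eunit F n (j+1) j * Eunit F n i (i+1) = 0 :=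
          Eunit_mul_ne _ _ _ _ _ _ (by omega)
        have x6 : Eunit F n (j+1) j * Eunit F n (pr n (i+1)) (pr n i) = 0 :=
          Eunit_mul_ne _ _ _ _ _ _ (by unfold pr; omega)
        have x7 : Eunit F n (pr n j) (pr n (j+1)) * Eunit F n i (i+1) = 0 :=
          Eunit_mul_ne _ _ _ _ _ _ (by unfold pr; omega)
        have x8 : Eunit F n (pr n j) (pr n (j+1)) * Eunit F n (pr n (i+1)) (pr n i) = 0 :=
          Eunit_mul_ne _ _ _ _ _ _ (by unfold pr; omega)
        simp only [Emat, Fmat, if_neg hin, if_neg hjn,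
          smul_sub, sub_mul, mul_sub, Matrix.smul_mul, Matrix.mul_smul, smul_smul,
          x1, x2, x3, x4, x5, x6, x7, x8, smul_zero, sub_zero, zero_sub, sub_self, neg_zero,
          sub_neg_eq_add, zero_add, add_zero]
end

section
/- The matrices K and R satisfy K·R = (rs⁻¹)^{2n}·K. (Equation (3.15) in the paper: K R^{±1} = (rs⁻¹)^{±2n} K.) -/
open Matrix Finset
open scoped Kronecker

section aux
variable {F : Type*} [Field F] {n : ℕ}

def dualF (n : ℕ) (d : Fin (2*n+1)) : Fin (2*n+1) := ⟨2*n - d.val, by omega⟩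

@[simp] lemma dualF_val (d : Fin (2*n+1)) : ((dualF n d) : ℕ) = 2*n - (d : ℕ) := by simp [dualF]

lemma EE_apply (a b c d : ℕ) (p₁ p₂ q₁ q₂ : Fin (2*n+1)) :
    (Eunit F n a b ⊗ₖ Eunit F n c d) (p₁, p₂) (q₁, q₂) =
      if (p₁:ℕ)+1 = a ∧ (q₁:ℕ)+1 = b ∧ (p₂:ℕ)+1 = c ∧ (q₂:ℕ)+1 = d then 1 else 0 := by
  simp only [Matrix.kroneckerMap_apply, Eunit, Matrix.of_apply]
  split_ifs <;> simp_all

lemma mwt_flip (k : ℕ) (hk : k ≤ 2*n) : mwt n (2*n+1-k) = - mwt n (k+1) := by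
  unfold mwt; split_ifs <;> omega

lemma Kmat_apply (t : F) (a b c d : Fin (2*n+1)) :
    Kmat F n t (a, b) (c, d) =
      if (b:ℕ)+1 = 2*n+1-(a:ℕ) ∧ (c:ℕ)+1 = 2*n+1-(d:ℕ) then
        t ^ (mwt n ((a:ℕ)+1) - mwt n ((d:ℕ)+1)) else 0 := by
  have ha := a.isLt; have hb := b.isLt; have hc := c.isLt; have hd := d.isLt
  unfold Kmat
  simp only [Matrix.sum_apply, Matrix.smul_apply, EE_apply, smul_eq_mul, mul_ite, mul_one,
    mul_zero, pr]
  rw [Finset.sum_eq_single ((a:ℕ)+1)]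
  · rw [Finset.sum_eq_single ((d:ℕ)+1)]
    · split_ifs <;> first | rfl | (exfalso; omega)
    · intro j hj hne; rw [if_neg]; omega
    · intro h; exfalso; apply h; simp [Finset.mem_Icc]; omega
  · intro i hi hne
    apply Finset.sum_eq_zero; intro j hj
    rw [if_neg]; omega
  · intro h; exfalso; apply h; simp [Finset.mem_Icc]; omega
lemma B2a (d e f : Fin (2*n+1)) :
    (∑ i ∈ Icc 1 n, ∑ j ∈ Icc (i + 1) n, Eunit F n i j ⊗ₖ Eunit F n j i)
      (dualF n d, d) (e, f) = 0 := by
  have hd := d.isLt; have he := e.isLt; have hf := f.isLt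
  simp only [Matrix.sum_apply, EE_apply, dualF_val]
  refine Finset.sum_eq_zero fun i hi => Finset.sum_eq_zero fun j hj => ?_
  simp only [Finset.mem_Icc, pr] at hi hj
  rw [if_neg]; omega

lemma B2b (d e f : Fin (2*n+1)) :
    (∑ i ∈ Icc 2 n, ∑ j ∈ Icc (pr n (i - 1)) (pr n 1), Eunit F n i j ⊗ₖ Eunit F n j i)
      (dualF n d, d) (e, f) = 0 := by
  have hd := d.isLt; have he := e.isLt; have hf := f.isLt
  simp only [Matrix.sum_apply, EE_apply, dualF_val]
  refine Finset.sum_eq_zero fun i hi => Finset.sum_eq_zero fun j hj => ?_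
  simp only [Finset.mem_Icc, pr] at hi hj
  rw [if_neg]; omega

lemma B2c (d e f : Fin (2*n+1)) :
    (∑ i ∈ Icc 1 (n - 1), ∑ j ∈ Icc (pr n n) (pr n (i + 1)), Eunit F n j i ⊗ₖ Eunit F n i j)
      (dualF n d, d) (e, f) = 0 := by
  have hd := d.isLt; have he := e.isLt; have hf := f.isLt
  simp only [Matrix.sum_apply, EE_apply, dualF_val]
  refine Finset.sum_eq_zero fun i hi => Finset.sum_eq_zero fun j hj => ?_
  simp only [Finset.mem_Icc, pr] at hi hj
  rw [if_neg]; omega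

lemma B2d (d e f : Fin (2*n+1)) :
    (∑ i ∈ Icc (pr n n) (pr n 2), ∑ j ∈ Icc (i + 1) (pr n 1), Eunit F n j i ⊗ₖ Eunit F n i j)
      (dualF n d, d) (e, f) = 0 := by
  have hd := d.isLt; have he := e.isLt; have hf := f.isLt
  simp only [Matrix.sum_apply, EE_apply, dualF_val]
  refine Finset.sum_eq_zero fun i hi => Finset.sum_eq_zero fun j hj => ?_
  simp only [Finset.mem_Icc, pr] at hi hj
  rw [if_neg]; omega

lemma B3a (d e f : Fin (2*n+1)) :
    (∑ i ∈ Icc 1 n, ∑ j ∈ Icc (i + 1) n, Eunit F n j i ⊗ₖ Eunit F n i j)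
      (dualF n d, d) (e, f) = 0 := by
  have hd := d.isLt; have he := e.isLt; have hf := f.isLt
  simp only [Matrix.sum_apply, EE_apply, dualF_val]
  refine Finset.sum_eq_zero fun i hi => Finset.sum_eq_zero fun j hj => ?_
  simp only [Finset.mem_Icc, pr] at hi hj
  rw [if_neg]; omega

lemma B3b (d e f : Fin (2*n+1)) :
    (∑ i ∈ Icc (pr n n) (pr n 2), ∑ j ∈ Icc (i + 1) (pr n 1), Eunit F n i j ⊗ₖ Eunit F n j i)
      (dualF n d, d) (e, f) = 0 := by
  have hd := d.isLt; have he := e.isLt; have hf := f.isLt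
  simp only [Matrix.sum_apply, EE_apply, dualF_val]
  refine Finset.sum_eq_zero fun i hi => Finset.sum_eq_zero fun j hj => ?_
  simp only [Finset.mem_Icc, pr] at hi hj
  rw [if_neg]; omega

lemma B3c (d e f : Fin (2*n+1)) :
    (∑ i ∈ Icc 2 n, ∑ j ∈ Icc (pr n (i - 1)) (pr n 1), Eunit F n j i ⊗ₖ Eunit F n i j)
      (dualF n d, d) (e, f) = 0 := by
  have hd := d.isLt; have he := e.isLt; have hf := f.isLt
  simp only [Matrix.sum_apply, EE_apply, dualF_val]
  refine Finset.sum_eq_zero fun i hi => Finset.sum_eq_zero fun j hj => ?_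
  simp only [Finset.mem_Icc, pr] at hi hj
  rw [if_neg]; omega

lemma B3d (d e f : Fin (2*n+1)) :
    (∑ i ∈ Icc 1 (n - 1), ∑ j ∈ Icc (pr n n) (pr n (i + 1)), Eunit F n i j ⊗ₖ Eunit F n j i)
      (dualF n d, d) (e, f) = 0 := by
  have hd := d.isLt; have he := e.isLt; have hf := f.isLt
  simp only [Matrix.sum_apply, EE_apply, dualF_val]
  refine Finset.sum_eq_zero fun i hi => Finset.sum_eq_zero fun j hj => ?_
  simp only [Finset.mem_Icc, pr] at hi hj
  rw [if_neg]; omega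

lemma B1 (d e f : Fin (2*n+1)) :
    (∑ i ∈ (Icc 1 (2 * n + 1)).erase (n + 1), Eunit F n i i ⊗ₖ Eunit F n i i)
      (dualF n d, d) (e, f) = 0 := by
  have hd := d.isLt; have he := e.isLt; have hf := f.isLt
  simp only [Matrix.sum_apply, EE_apply, dualF_val]
  refine Finset.sum_eq_zero fun i hi => ?_
  simp only [Finset.mem_erase, Finset.mem_Icc] at hi
  rw [if_neg]; omega

lemma B4 (d e f : Fin (2*n+1)) :
    (∑ i ∈ (Icc 1 (2 * n + 1)).erase (n + 1), Eunit F n i (n + 1) ⊗ₖ Eunit F n (n + 1) i)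
      (dualF n d, d) (e, f) = 0 := by
  have hd := d.isLt; have he := e.isLt; have hf := f.isLt
  simp only [Matrix.sum_apply, EE_apply, dualF_val]
  refine Finset.sum_eq_zero fun i hi => ?_
  simp only [Finset.mem_erase, Finset.mem_Icc] at hi
  rw [if_neg]; omega

lemma B5 (d e f : Fin (2*n+1)) :
    (∑ j ∈ (Icc 1 (2 * n + 1)).erase (n + 1), Eunit F n (n + 1) j ⊗ₖ Eunit F n j (n + 1))
      (dualF n d, d) (e, f) = 0 := by
  have hd := d.isLt; have he := e.isLt; have hf := f.isLt
  simp only [Matrix.sum_apply, EE_apply, dualF_val]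
  refine Finset.sum_eq_zero fun i hi => ?_
  simp only [Finset.mem_erase, Finset.mem_Icc] at hi
  rw [if_neg]; omega

lemma B6 (d e f : Fin (2*n+1)) :
    (∑ i ∈ (Icc 1 (2 * n + 1)).erase (n + 1), Eunit F n (pr n i) i ⊗ₖ Eunit F n i (pr n i))
      (dualF n d, d) (e, f)
    = if (e:ℕ) = (d:ℕ) ∧ (f:ℕ) = 2*n - (d:ℕ) ∧ (d:ℕ) ≠ n then 1 else 0 := by
  have hd := d.isLt; have he := e.isLt; have hf := f.isLt
  simp only [Matrix.sum_apply, EE_apply, dualF_val, pr]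
  by_cases hdn : (d:ℕ) = n
  · rw [if_neg (by omega)]
    refine Finset.sum_eq_zero fun i hi => ?_
    simp only [Finset.mem_erase, Finset.mem_Icc] at hi
    rw [if_neg]; omega
  · rw [Finset.sum_eq_single ((d:ℕ)+1)]
    · split_ifs <;> first | rfl | (exfalso; omega)
    · intro i hi hne; rw [if_neg]; omega
    · intro h; exfalso; apply h
      simp only [Finset.mem_erase, Finset.mem_Icc]; omega

lemma B7a (d e f : Fin (2*n+1)) :
    (∑ i ∈ Icc 1 (2 * n + 1), ∑ j ∈ Icc 1 (i - 1), Eunit F n i i ⊗ₖ Eunit F n j j)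
      (dualF n d, d) (e, f)
    = if (d:ℕ) < n ∧ (e:ℕ) = 2*n - (d:ℕ) ∧ (f:ℕ) = (d:ℕ) then 1 else 0 := by
  have hd := d.isLt; have he := e.isLt; have hf := f.isLt
  simp only [Matrix.sum_apply, EE_apply, dualF_val]
  by_cases H : (d:ℕ) < n ∧ (e:ℕ) = 2*n - (d:ℕ) ∧ (f:ℕ) = (d:ℕ)
  · rw [if_pos H]
    rw [Finset.sum_eq_single (2*n - (d:ℕ) + 1)]
    · rw [Finset.sum_eq_single ((d:ℕ)+1)]
      · rw [if_pos (by omega)]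
      · intro j hj hne; rw [if_neg]; omega
      · intro h; exfalso; apply h; simp only [Finset.mem_Icc]; omega
    · intro i hi hne; refine Finset.sum_eq_zero fun j hj => ?_; rw [if_neg]; omega
    · intro h; exfalso; apply h; simp only [Finset.mem_Icc]; omega
  · rw [if_neg H]
    refine Finset.sum_eq_zero fun i hi => Finset.sum_eq_zero fun j hj => ?_
    simp only [Finset.mem_Icc] at hi hj
    rw [if_neg]; omega

lemma B7b (t : F) (d e f : Fin (2*n+1)) :
    (∑ i ∈ Icc 1 (2 * n + 1), ∑ j ∈ Icc 1 (i - 1),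
        t ^ (mwt n i - mwt n j) • (Eunit F n i (pr n j) ⊗ₖ Eunit F n (pr n i) j))
      (dualF n d, d) (e, f)
    = if (f:ℕ) + (d:ℕ) < 2*n ∧ (e:ℕ) = 2*n - (f:ℕ) then
        t ^ (mwt n (2*n+1-(d:ℕ)) - mwt n ((f:ℕ)+1)) else 0 := by
  have hd := d.isLt; have he := e.isLt; have hf := f.isLt
  simp only [Matrix.sum_apply, Matrix.smul_apply, EE_apply, smul_eq_mul, mul_ite, mul_one,
    mul_zero, dualF_val, pr]
  by_cases H : (f:ℕ) + (d:ℕ) < 2*n ∧ (e:ℕ) = 2*n - (f:ℕ)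
  · rw [if_pos H]
    rw [Finset.sum_eq_single (2*n - (d:ℕ) + 1)]
    · rw [Finset.sum_eq_single ((f:ℕ)+1)]
      · rw [if_pos (by omega), show 2*n - (d:ℕ) + 1 = 2*n+1-(d:ℕ) by omega]
      · intro j hj hne; rw [if_neg]; omega
      · intro h; exfalso; apply h; simp only [Finset.mem_Icc]; omega
    · intro i hi hne; refine Finset.sum_eq_zero fun j hj => ?_; rw [if_neg]; omega
    · intro h; exfalso; apply h; simp only [Finset.mem_Icc]; omega
  · rw [if_neg H]
    refine Finset.sum_eq_zero fun i hi => Finset.sum_eq_zero fun j hj => ?_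
    simp only [Finset.mem_Icc] at hi hj
    rw [if_neg]; omega

lemma B8 (d e f : Fin (2*n+1)) :
    (Eunit F n (n + 1) (n + 1) ⊗ₖ Eunit F n (n + 1) (n + 1)) (dualF n d, d) (e, f)
    = if (d:ℕ) = n ∧ (e:ℕ) = n ∧ (f:ℕ) = n then 1 else 0 := by
  have hd := d.isLt; have he := e.isLt; have hf := f.isLt
  rw [EE_apply]
  exact if_congr (by simp only [dualF_val]; omega) rfl rfl

lemma R_row (r s t : F) (d e f : Fin (2*n+1)) :
    Rmat F n r s t (dualF n d, d) (e, f) =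
      (if (e:ℕ) = (d:ℕ) ∧ (f:ℕ) = 2*n - (d:ℕ) ∧ (d:ℕ) ≠ n then r * s⁻¹ else 0)
    + (if (d:ℕ) = n ∧ (e:ℕ) = n ∧ (f:ℕ) = n then 1 else 0)
    + (if (d:ℕ) < n ∧ (e:ℕ) = 2*n - (d:ℕ) ∧ (f:ℕ) = (d:ℕ) then r⁻¹ * s - r * s⁻¹ else 0)
    - (if (f:ℕ) + (d:ℕ) < 2*n ∧ (e:ℕ) = 2*n - (f:ℕ) then
        (r⁻¹ * s - r * s⁻¹) * t ^ (mwt n (2*n+1-(d:ℕ)) - mwt n ((f:ℕ)+1)) else 0) := by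
  unfold Rmat
  simp only [Matrix.add_apply, Matrix.sub_apply, Matrix.smul_apply, smul_eq_mul]
  rw [B1, B2a, B2b, B2c, B2d, B3a, B3b, B3c, B3d, B4, B5, B6, B7a, B7b, B8]
  simp only [mul_ite, mul_one, mul_zero, mul_sub]
  ring

noncomputable def Gf (F : Type*) [Field F] (t : F) (n M : ℕ) : F :=
  ∑ k ∈ Finset.range M, t ^ (-2 * mwt n (k+1))

lemma Gtel (t : F) (ht : t ≠ 0) (M : ℕ) (hM : M ≤ 2*n) :
    (t^(2:ℤ) - t^(-2:ℤ)) * Gf F t n M =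
      (if M ≤ n then t ^ (4*(M:ℤ) - 4*(n:ℤ))
       else t ^ (4*(M:ℤ) - 4*(n:ℤ) - 4) + t^(2:ℤ) - t^(-2:ℤ)) - t ^ (-4*(n:ℤ)) := by
  induction M with
  | zero =>
      simp only [Gf, Finset.range_zero, Finset.sum_empty, mul_zero, Nat.cast_zero,
        if_pos (Nat.zero_le n)]
      norm_num
  | succ M ih =>
      have hG : Gf F t n (M+1) = Gf F t n M + t ^ (-2 * mwt n (M+1)) := by
        rw [Gf, Finset.sum_range_succ]; rfl
      rw [hG, mul_add, ih (by omega)]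
      by_cases h1 : M + 1 ≤ n
      · have hm : mwt n (M+1) = 2*(n:ℤ) - 1 - 2*(M:ℤ) := by unfold mwt; split_ifs <;> omega
        rw [if_pos (by omega : M ≤ n), if_pos h1, hm]
        push_cast
        rw [sub_mul,
          show (4*((M:ℤ)+1) - 4*(n:ℤ)) = 2 + (-2*(2*(n:ℤ)-1-2*(M:ℤ))) by ring,
          show (4*(M:ℤ) - 4*(n:ℤ)) = -2 + (-2*(2*(n:ℤ)-1-2*(M:ℤ))) by ring,
          zpow_add₀ ht, zpow_add₀ ht]
        ring
      · by_cases h2 : M + 1 = n + 1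
        · have hm : mwt n (M+1) = 0 := by unfold mwt; split_ifs <;> omega
          rw [if_pos (by omega : M ≤ n), if_neg h1, hm]
          push_cast
          rw [show (4*((M:ℤ)+1) - 4*(n:ℤ) - 4) = 0 by omega,
              show (4*(M:ℤ) - 4*(n:ℤ)) = 0 by omega]
          simp only [zpow_zero]
          ring
        · have hm : mwt n (M+1) = 2*(n:ℤ) + 1 - 2*(M:ℤ) := by unfold mwt; split_ifs <;> omega
          rw [if_neg (by omega : ¬ M ≤ n), if_neg h1, hm]
          push_cast
          rw [sub_mul,
            show (4*((M:ℤ)+1) - 4*(n:ℤ) - 4) = 2 + (-2*(2*(n:ℤ)+1-2*(M:ℤ))) by ring,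
            show (4*(M:ℤ) - 4*(n:ℤ) - 4) = -2 + (-2*(2*(n:ℤ)+1-2*(M:ℤ))) by ring,
            zpow_add₀ ht, zpow_add₀ ht]
          ring

lemma range_ite_sum (g : ℕ → F) (M N : ℕ) (h : M ≤ N) :
    ∑ k ∈ Finset.range N, (if k < M then g k else 0) = ∑ k ∈ Finset.range M, g k := by
  rw [← Finset.sum_subset (Finset.range_subset_range.2 h)
      (fun k _ hk => if_neg (fun hlt => hk (Finset.mem_range.2 hlt)))]
  exact Finset.sum_congr rfl fun k hk => if_pos (Finset.mem_range.1 hk)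

lemma fin_sum_pick (g : Fin (2*n+1) → F) (P : Fin (2*n+1) → Prop) [DecidablePred P]
    (d₀ : Fin (2*n+1)) (hP : ∀ d, P d → d = d₀) :
    (∑ d : Fin (2*n+1), if P d then g d else 0) = if P d₀ then g d₀ else 0 := by
  refine Finset.sum_eq_single d₀ (fun d _ hne => ?_)
    (fun h => absurd (Finset.mem_univ d₀) h)
  by_cases h : P d
  · exact absurd (hP d h) hne
  · exact if_neg h

lemma Sum_row (r s t : F) (hr : r ≠ 0) (hs : s ≠ 0) (ht : t ≠ 0) (hts : t^2 = r⁻¹ * s)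
    (e f : Fin (2*n+1)) :
    (∑ d : Fin (2*n+1), t ^ (-(mwt n ((d:ℕ)+1))) * Rmat F n r s t (dualF n d, d) (e, f))
    = if (e:ℕ) = 2*n - (f:ℕ) then (r * s⁻¹)^(2*n) * t ^ (-(mwt n ((f:ℕ)+1))) else 0 := by
  have he' := e.isLt; have hf' := f.isLt
  have ht2 : t^(2:ℤ) = r⁻¹ * s := by rw [← hts]; norm_cast
  have htm2 : t^(-2:ℤ) = r * s⁻¹ := by
    rw [show (-2:ℤ) = -(2:ℤ) by ring, _root_.zpow_neg, ht2, mul_inv, inv_inv, mul_comm]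
  have htn : t ^ (-4*(n:ℤ)) = (r * s⁻¹)^(2*n) := by
    rw [← htm2, ← zpow_natCast (t ^ (-2:ℤ)) (2*n), ← _root_.zpow_mul]
    congr 1; push_cast; ring
  by_cases heq : (e:ℕ) = 2*n - (f:ℕ)
  · rw [if_pos heq]
    simp only [R_row, mul_add, mul_sub, mul_ite, mul_zero]
    rw [Finset.sum_sub_distrib, Finset.sum_add_distrib, Finset.sum_add_distrib]
    have hSA : (∑ d : Fin (2*n+1),
        if (e:ℕ) = (d:ℕ) ∧ (f:ℕ) = 2*n - (d:ℕ) ∧ (d:ℕ) ≠ n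
          then t ^ (-(mwt n ((d:ℕ)+1))) * (r * s⁻¹) else 0)
        = if (e:ℕ) = (e:ℕ) ∧ (f:ℕ) = 2*n - (e:ℕ) ∧ (e:ℕ) ≠ n
          then t ^ (-(mwt n ((e:ℕ)+1))) * (r * s⁻¹) else 0 :=
      fin_sum_pick _ _ e (fun d h => Fin.val_injective (by omega))
    have hSB : (∑ d : Fin (2*n+1),
        if (d:ℕ) = n ∧ (e:ℕ) = n ∧ (f:ℕ) = n
          then t ^ (-(mwt n ((d:ℕ)+1))) * 1 else 0)
        = if (f:ℕ) = n ∧ (e:ℕ) = n ∧ (f:ℕ) = n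
          then t ^ (-(mwt n ((f:ℕ)+1))) * 1 else 0 :=
      fin_sum_pick _ _ f (fun d h => Fin.val_injective (by omega))
    have hSC : (∑ d : Fin (2*n+1),
        if (d:ℕ) < n ∧ (e:ℕ) = 2*n - (d:ℕ) ∧ (f:ℕ) = (d:ℕ)
          then t ^ (-(mwt n ((d:ℕ)+1))) * (r⁻¹ * s) - t ^ (-(mwt n ((d:ℕ)+1))) * (r * s⁻¹) else 0)
        = if (f:ℕ) < n ∧ (e:ℕ) = 2*n - (f:ℕ) ∧ (f:ℕ) = (f:ℕ)
          then t ^ (-(mwt n ((f:ℕ)+1))) * (r⁻¹ * s) - t ^ (-(mwt n ((f:ℕ)+1))) * (r * s⁻¹) else 0 :=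
      fin_sum_pick _ _ f (fun d h => Fin.val_injective (by omega))
    have hSD : (∑ d : Fin (2*n+1),
        if (f:ℕ) + (d:ℕ) < 2*n ∧ (e:ℕ) = 2*n - (f:ℕ)
          then t ^ (-(mwt n ((d:ℕ)+1))) *
            ((r⁻¹ * s - r * s⁻¹) * t ^ (mwt n (2*n+1-(d:ℕ)) - mwt n ((f:ℕ)+1))) else 0)
        = (r⁻¹ * s - r * s⁻¹) * Gf F t n (2*n - (f:ℕ)) * t ^ (-(mwt n ((f:ℕ)+1))) := by
      have step : ∀ d : Fin (2*n+1),
          (if (f:ℕ) + (d:ℕ) < 2*n ∧ (e:ℕ) = 2*n - (f:ℕ)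
            then t ^ (-(mwt n ((d:ℕ)+1))) *
              ((r⁻¹ * s - r * s⁻¹) * t ^ (mwt n (2*n+1-(d:ℕ)) - mwt n ((f:ℕ)+1))) else 0)
          = if (d:ℕ) < 2*n - (f:ℕ)
            then ((r⁻¹ * s - r * s⁻¹) * t ^ (-(mwt n ((f:ℕ)+1)))) * t ^ (-2 * mwt n ((d:ℕ)+1))
            else 0 := by
        intro d
        have hd := d.isLt
        by_cases hlt : (d:ℕ) < 2*n - (f:ℕ)
        · rw [if_pos (by omega), if_pos hlt, mwt_flip _ (by omega),
            show -mwt n ((d:ℕ)+1) - mwt n ((f:ℕ)+1)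
              = (-(mwt n ((f:ℕ)+1))) + (-(mwt n ((d:ℕ)+1))) by ring, zpow_add₀ ht,
            show (-2) * mwt n ((d:ℕ)+1)
              = (-(mwt n ((d:ℕ)+1))) + (-(mwt n ((d:ℕ)+1))) by ring, zpow_add₀ ht]
          ring
        · rw [if_neg (by omega), if_neg hlt]
      rw [Finset.sum_congr rfl (fun d _ => step d)]
      rw [Fin.sum_univ_eq_sum_range
        (fun k => if k < 2*n - (f:ℕ)
          then ((r⁻¹ * s - r * s⁻¹) * t ^ (-(mwt n ((f:ℕ)+1)))) * t ^ (-2 * mwt n (k+1))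
          else 0) (2*n+1)]
      rw [range_ite_sum _ _ _ (by omega), Gf, Finset.mul_sum, Finset.sum_mul]
      exact Finset.sum_congr rfl fun k _ => by ring
    rw [hSA, hSB, hSC, hSD, ← htn, ← ht2, ← htm2]
    rcases lt_trichotomy ((f:ℕ)) n with h3 | h3 | h3
    · rw [if_pos (by omega : (e:ℕ) = (e:ℕ) ∧ (f:ℕ) = 2*n - (e:ℕ) ∧ (e:ℕ) ≠ n),
        if_neg (by omega : ¬((f:ℕ) = n ∧ (e:ℕ) = n ∧ (f:ℕ) = n)),
        if_pos (by omega : (f:ℕ) < n ∧ (e:ℕ) = 2*n - (f:ℕ) ∧ (f:ℕ) = (f:ℕ)),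
        heq, show 2*n - (f:ℕ) + 1 = 2*n+1 - (f:ℕ) by omega, mwt_flip _ (by omega), neg_neg,
        Gtel t ht _ (by omega), if_neg (by omega : ¬(2*n - (f:ℕ) ≤ n)),
        show (((2*n - (f:ℕ)):ℕ):ℤ) = 2*(n:ℤ) - ((f:ℕ):ℤ) by omega,
        show mwt n ((f:ℕ)+1) = 2*(n:ℤ) - 1 - 2*((f:ℕ):ℤ) from by unfold mwt; split_ifs <;> omega]
      simp only [sub_mul, add_mul, mul_sub, mul_add, ← zpow_add₀ ht]
      ring_nf
    · rw [if_neg (by omega : ¬((e:ℕ) = (e:ℕ) ∧ (f:ℕ) = 2*n - (e:ℕ) ∧ (e:ℕ) ≠ n)),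
        if_pos (by omega : (f:ℕ) = n ∧ (e:ℕ) = n ∧ (f:ℕ) = n),
        if_neg (by omega : ¬((f:ℕ) < n ∧ (e:ℕ) = 2*n - (f:ℕ) ∧ (f:ℕ) = (f:ℕ))),
        Gtel t ht _ (by omega), if_pos (by omega : 2*n - (f:ℕ) ≤ n),
        show (((2*n - (f:ℕ)):ℕ):ℤ) = (n:ℤ) by omega,
        show mwt n ((f:ℕ)+1) = 0 from by unfold mwt; split_ifs <;> omega]
      rw [show (-0:ℤ) = 0 by ring, show 4*(n:ℤ)-4*(n:ℤ) = 0 by ring, zpow_zero]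
      ring
    · rw [if_pos (by omega : (e:ℕ) = (e:ℕ) ∧ (f:ℕ) = 2*n - (e:ℕ) ∧ (e:ℕ) ≠ n),
        if_neg (by omega : ¬((f:ℕ) = n ∧ (e:ℕ) = n ∧ (f:ℕ) = n)),
        if_neg (by omega : ¬((f:ℕ) < n ∧ (e:ℕ) = 2*n - (f:ℕ) ∧ (f:ℕ) = (f:ℕ))),
        heq, show 2*n - (f:ℕ) + 1 = 2*n+1 - (f:ℕ) by omega, mwt_flip _ (by omega), neg_neg,
        Gtel t ht _ (by omega), if_pos (by omega : 2*n - (f:ℕ) ≤ n),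
        show (((2*n - (f:ℕ)):ℕ):ℤ) = 2*(n:ℤ) - ((f:ℕ):ℤ) by omega,
        show mwt n ((f:ℕ)+1) = 2*(n:ℤ) + 1 - 2*((f:ℕ):ℤ) from by unfold mwt; split_ifs <;> omega]
      simp only [sub_mul, add_mul, mul_sub, mul_add, ← zpow_add₀ ht]
      ring_nf
  · rw [if_neg heq]
    refine Finset.sum_eq_zero fun d _ => ?_
    have hd := d.isLt
    rw [R_row, if_neg, if_neg, if_neg, if_neg]
    · ring
    all_goals omega

lemma KR_inner (r s t : F) (a b e f d : Fin (2*n+1)) :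
    (∑ c : Fin (2*n+1), Kmat F n t (a, b) (c, d) * Rmat F n r s t (c, d) (e, f))
    = (if (b:ℕ)+1 = 2*n+1-(a:ℕ) then t ^ (mwt n ((a:ℕ)+1) - mwt n ((d:ℕ)+1)) else 0)
        * Rmat F n r s t (dualF n d, d) (e, f) := by
  have hd := d.isLt
  have h0 : ∀ c : Fin (2*n+1), c ∈ Finset.univ → c ≠ dualF n d →
      Kmat F n t (a, b) (c, d) * Rmat F n r s t (c, d) (e, f) = 0 := by
    intro c _ hne
    rw [Kmat_apply, if_neg, zero_mul]
    rintro ⟨-, h2⟩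
    exact hne (Fin.val_injective (by simp only [dualF_val]; omega))
  rw [Finset.sum_eq_single (dualF n d) h0 (fun h => absurd (Finset.mem_univ _) h), Kmat_apply]
  congr 1
  exact if_congr (by simp only [dualF_val]; constructor
                     · exact fun h => h.1
                     · exact fun h => ⟨h, by omega⟩) rfl rfl

end aux

/-- **Equation (3.15)** (positive case): `K R = (r s⁻¹)^{2n} K`. -/


theorem KR_eq (n : ℕ) (hn : 1 ≤ n)
    (F : Type*) [Field F] (r s t : F)
    (hr : r ≠ 0) (hs : s ≠ 0) (ht : t ≠ 0) (hts : t ^ 2 = r⁻¹ * s) :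
    Kmat F n t * Rmat F n r s t = (r * s⁻¹) ^ (2 * n) • Kmat F n t := by
  ext ⟨a, b⟩ ⟨e, f⟩
  have ha := a.isLt; have hb := b.isLt; have he := e.isLt; have hf := f.isLt
  rw [Matrix.mul_apply, Matrix.smul_apply, smul_eq_mul, Fintype.sum_prod_type, Finset.sum_comm]
  rw [Finset.sum_congr rfl (fun d _ => KR_inner r s t a b e f d)]
  by_cases hbc : (b:ℕ)+1 = 2*n+1-(a:ℕ)
  · simp only [if_pos hbc]
    have hsplit : ∀ d : Fin (2*n+1),
        t ^ (mwt n ((a:ℕ)+1) - mwt n ((d:ℕ)+1)) * Rmat F n r s t (dualF n d, d) (e, f)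
        = t ^ (mwt n ((a:ℕ)+1)) *
            (t ^ (-(mwt n ((d:ℕ)+1))) * Rmat F n r s t (dualF n d, d) (e, f)) := by
      intro d
      rw [show mwt n ((a:ℕ)+1) - mwt n ((d:ℕ)+1)
            = mwt n ((a:ℕ)+1) + (-(mwt n ((d:ℕ)+1))) by ring, zpow_add₀ ht, mul_assoc]
    rw [Finset.sum_congr rfl (fun d _ => hsplit d), ← Finset.mul_sum,
      Sum_row r s t hr hs ht hts e f, Kmat_apply]
    by_cases hef : (e:ℕ) = 2*n - (f:ℕ)
    · rw [if_pos hef, if_pos (⟨hbc, by omega⟩ : _ ∧ _)]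
      rw [show mwt n ((a:ℕ)+1) - mwt n ((f:ℕ)+1)
            = mwt n ((a:ℕ)+1) + (-(mwt n ((f:ℕ)+1))) by ring, zpow_add₀ ht]
      ring
    · rw [if_neg hef, if_neg (by omega : ¬((b:ℕ)+1 = 2*n+1-(a:ℕ) ∧ (e:ℕ)+1 = 2*n+1-(f:ℕ))),
        mul_zero, mul_zero]
  · simp only [if_neg hbc, zero_mul, Finset.sum_const_zero]
    rw [Kmat_apply, if_neg (fun h => hbc h.1), mul_zero]
end
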